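/- arXiv:2604.03548 — 6 statements merged into one kernel-verified Lean document; each statement's English description precedes it below -/
import Mathlib

section
/- Let N ≥ 3 be an integer and S ⊆ ℝ a set with at least two elements. Let L₀₁ be a linear operator on the space of real polynomial functions of the coordinates (η_x)_{x∈ℤ/Nℤ} on S^{ℤ/Nℤ} satisfying: (A1) L₀₁ annihilates the constant function 1; (A2) L₀₁(FG) = F·(L₀₁G) whenever F is a polynomial function only of (η_y)_{y≠0,1} and of η₀+η₁; (A3) L₀₁F = σ₀₁(L₀₁(σ₀₁F)) for every polynomial function F. Suppose L₀₁η₀ = pη₀ + qη₁ + r (as functions on S^{ℤ/Nℤ}) for real constants p, q, r, and that L₀₁η₀ is not the zero function. Set L_{x,x+1} = τ_x L₀₁ τ_{−x} and L = Σ_{x∈ℤ/Nℤ} L_{x,x+1}, and suppose there exists a product probability measure ν = μ^{⊗ℤ/Nℤ} on S^{ℤ/Nℤ} whose marginal μ is not a Dirac measure and has finite second moment, such that ∫ η₀·(−Lη₀) dν ≥ 0. Then r = 0, q = −p, and D := −p > 0; in other words L₀₁η₀ = D(η₁ − η₀) for some constant D > 0. -/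
open MeasureTheory

/-- The coordinate function `η ↦ η_x` on the configuration space `S^(ℤ/Nℤ)`. -/
def coordFn {N : ℕ} (S : Set ℝ) (x : ZMod N) : (ZMod N → S) → ℝ := fun η => (η x : ℝ)

/-- `f` is a real polynomial function of the coordinates `(η_x)_{x ∈ ℤ/Nℤ}`. -/
def IsPolyFn {N : ℕ} (S : Set ℝ) (f : (ZMod N → S) → ℝ) : Prop :=
  ∃ P : MvPolynomial (ZMod N) ℝ, ∀ η, f η = MvPolynomial.eval (fun x => (η x : ℝ)) P

/-- The shift `τ_x` acting on functions: `(τ_x f)(η) = f(τ_x η)`, `(τ_x η)_z = η_{z+x}`. -/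
def shiftFn {N : ℕ} (S : Set ℝ) (x : ZMod N) (f : (ZMod N → S) → ℝ) : (ZMod N → S) → ℝ :=
  fun η => f fun z => η (z + x)

/-- The swap `σ₀₁` acting on functions: `(σ₀₁F)(η) = F(σ₀₁η)`, where `σ₀₁η` exchanges
the coordinates `η₀` and `η₁`. -/
def swapFn {N : ℕ} (S : Set ℝ) (f : (ZMod N → S) → ℝ) : (ZMod N → S) → ℝ :=
  fun η => f fun z => η (Equiv.swap (0 : ZMod N) 1 z)

/-- `F` is a function only of the coordinates `(η_y)_{y ≠ 0,1}` and of `η₀ + η₁`. -/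
def BondInvariant {N : ℕ} (S : Set ℝ) (F : (ZMod N → S) → ℝ) : Prop :=
  ∀ η η' : ZMod N → S, (∀ y : ZMod N, y ≠ 0 → y ≠ 1 → η y = η' y) →
    ((η 0 : ℝ) + (η 1 : ℝ) = (η' 0 : ℝ) + (η' 1 : ℝ)) → F η = F η'

/-- The bond operator `L_{x,x+1} = τ_x ∘ L₀₁ ∘ τ_{−x}`. -/
def bondGen {N : ℕ} {S : Set ℝ} (L01 : ((ZMod N → S) → ℝ) →ₗ[ℝ] ((ZMod N → S) → ℝ))
    (x : ZMod N) (f : (ZMod N → S) → ℝ) : (ZMod N → S) → ℝ :=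
  shiftFn S x (L01 (shiftFn S (-x) f))

/-- The full generator `L = Σ_{x ∈ ℤ/Nℤ} L_{x,x+1}`. -/
noncomputable def fullGen {N : ℕ} [NeZero N] {S : Set ℝ}
    (L01 : ((ZMod N → S) → ℝ) →ₗ[ℝ] ((ZMod N → S) → ℝ))
    (f : (ZMod N → S) → ℝ) : (ZMod N → S) → ℝ :=
  ∑ x : ZMod N, bondGen L01 x f


lemma integral_pi_single {ι : Type*} [Fintype ι] [DecidableEq ι] {α : Type*} [MeasurableSpace α]
    (μ : Measure α) [IsProbabilityMeasure μ] (i : ι) (g : α → ℝ) :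
    ∫ x : ι → α, g (x i) ∂(Measure.pi fun _ : ι => μ) = ∫ s, g s ∂μ := by
  letI : MeasureSpace α := ⟨μ⟩
  haveI : IsProbabilityMeasure (volume : Measure α) := ‹IsProbabilityMeasure μ›
  have hvol : (Measure.pi fun _ : ι => μ) = (volume : Measure (ι → α)) := rfl
  have h1 : ∀ x : ι → α, g (x i) = ∏ j, (fun j => if j = i then g else 1) j (x j) := by
    intro x
    rw [Fintype.prod_eq_single i (fun j hj => by simp [hj])]
    simp
  calc ∫ x : ι → α, g (x i) ∂(Measure.pi fun _ : ι => μ)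
      = ∫ x : ι → α, ∏ j, (fun j => if j = i then g else 1) j (x j) := by
        rw [hvol]; exact integral_congr_ae (Filter.Eventually.of_forall h1)
    _ = ∏ j, ∫ s, (fun j => if j = i then g else 1) j s := integral_fintype_prod_eq_prod (μ := fun _ => μ) _
    _ = ∫ s, g s ∂μ := by
        rw [Fintype.prod_eq_single i (fun j hj => by simp [hj])]
        simp only [if_pos rfl]
        rfl

lemma integral_pi_pair {ι : Type*} [Fintype ι] [DecidableEq ι] {α : Type*} [MeasurableSpace α]
    (μ : Measure α) [IsProbabilityMeasure μ] (i j : ι) (hij : i ≠ j) (g h : α → ℝ) :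
    ∫ x : ι → α, g (x i) * h (x j) ∂(Measure.pi fun _ : ι => μ)
      = (∫ s, g s ∂μ) * (∫ s, h s ∂μ) := by
  letI : MeasureSpace α := ⟨μ⟩
  haveI : IsProbabilityMeasure (volume : Measure α) := ‹IsProbabilityMeasure μ›
  have hvol : (Measure.pi fun _ : ι => μ) = (volume : Measure (ι → α)) := rfl
  set F : ι → α → ℝ := fun k => if k = i then g else if k = j then h else 1 with hF
  have h1 : ∀ x : ι → α, g (x i) * h (x j) = ∏ k, F k (x k) := by
    intro x
    rw [Fintype.prod_eq_mul i j hij (fun k hk => by simp [hF, hk.1, hk.2])]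
    simp [hF, hij.symm]
  calc ∫ x : ι → α, g (x i) * h (x j) ∂(Measure.pi fun _ : ι => μ)
      = ∫ x : ι → α, ∏ k, F k (x k) := by
        rw [hvol]; exact integral_congr_ae (Filter.Eventually.of_forall h1)
    _ = ∏ k, ∫ s, F k s := integral_fintype_prod_eq_prod (μ := fun _ => μ) _
    _ = (∫ s, g s ∂μ) * (∫ s, h s ∂μ) := by
        rw [Fintype.prod_eq_mul i j hij (fun k hk => by simp [hF, hk.1, hk.2])]
        simp only [hF, if_pos rfl, if_neg hij.symm]
        rfl

lemma integrable_pi_single {ι : Type*} [Fintype ι] [DecidableEq ι] {α : Type*} [MeasurableSpace α]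
    (μ : Measure α) [IsProbabilityMeasure μ] (i : ι) (g : α → ℝ) (hg : Integrable g μ) :
    Integrable (fun x : ι → α => g (x i)) (Measure.pi fun _ : ι => μ) := by
  letI : MeasureSpace α := ⟨μ⟩
  haveI : IsProbabilityMeasure (volume : Measure α) := ‹IsProbabilityMeasure μ›
  have hvol : (Measure.pi fun _ : ι => μ) = (volume : Measure (ι → α)) := rfl
  rw [hvol]
  have h1 : (fun x : ι → α => g (x i))
      = fun x : ι → α => ∏ k, (fun k => if k = i then g else 1) k (x k) := by
    funext x
    rw [Fintype.prod_eq_single i (fun k hk => by simp [hk])]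
    simp
  rw [h1]
  exact Integrable.fintype_prod (fun k => by
    by_cases hk : k = i
    · simp only [if_pos hk]; exact hg
    · simp only [if_neg hk]; exact integrable_const 1)

lemma integrable_pi_pair {ι : Type*} [Fintype ι] [DecidableEq ι] {α : Type*} [MeasurableSpace α]
    (μ : Measure α) [IsProbabilityMeasure μ] (i j : ι) (hij : i ≠ j) (g h : α → ℝ)
    (hg : Integrable g μ) (hh : Integrable h μ) :
    Integrable (fun x : ι → α => g (x i) * h (x j)) (Measure.pi fun _ : ι => μ) := by
  letI : MeasureSpace α := ⟨μ⟩
  haveI : IsProbabilityMeasure (volume : Measure α) := ‹IsProbabilityMeasure μ›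
  have hvol : (Measure.pi fun _ : ι => μ) = (volume : Measure (ι → α)) := rfl
  rw [hvol]
  set F : ι → α → ℝ := fun k => if k = i then g else if k = j then h else 1 with hF
  have h1 : (fun x : ι → α => g (x i) * h (x j)) = fun x : ι → α => ∏ k, F k (x k) := by
    funext x
    rw [Fintype.prod_eq_mul i j hij (fun k hk => by simp [hF, hk.1, hk.2])]
    simp [hF, hij.symm]
  rw [h1]
  exact Integrable.fintype_prod (fun k => by
    by_cases hk : k = i
    · simp only [hF, if_pos hk]; exact hg
    · by_cases hk' : k = j
      · simp only [hF, if_neg hk, if_pos hk', if_neg hij.symm]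
        exact hh
      · simp only [hF, if_neg hk, if_neg hk']; exact integrable_const 1)

lemma var_pos_of_not_dirac {S : Set ℝ} (μ : Measure S) [IsProbabilityMeasure μ]
    (hμd : ∀ a : S, μ ≠ Measure.dirac a)
    (hμ2 : Integrable (fun s : S => (s : ℝ) ^ 2) μ) :
    0 < (∫ s : S, (s:ℝ)^2 ∂μ) - (∫ s : S, (s:ℝ) ∂μ)^2 := by
  have hmeas : AEStronglyMeasurable (fun s : S => (s:ℝ)) μ :=
    continuous_subtype_val.aestronglyMeasurable
  have hcoe : Integrable (fun s : S => (s:ℝ)) μ := by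
    refine Integrable.mono' ((integrable_const (1:ℝ)).add hμ2) hmeas ?_
    refine Filter.Eventually.of_forall fun s => ?_
    show ‖(s:ℝ)‖ ≤ 1 + (s:ℝ)^2
    rw [Real.norm_eq_abs]
    nlinarith [sq_nonneg (|(s:ℝ)| - 1), sq_abs (s:ℝ)]
  set m1 := ∫ s : S, (s:ℝ) ∂μ with hm1
  have hi1 : Integrable (fun s : S => (s:ℝ)^2 - 2*m1*(s:ℝ)) μ := by
    exact hμ2.sub (hcoe.const_mul (2*m1))
  have hintf : Integrable (fun s : S => ((s:ℝ) - m1)^2) μ := by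
    have h1 : (fun s : S => ((s:ℝ) - m1)^2)
        = fun s : S => ((s:ℝ)^2 - 2*m1*(s:ℝ)) + m1^2 := by funext s; ring
    rw [h1]
    exact hi1.add (integrable_const _)
  have hexp : ∫ s : S, ((s:ℝ) - m1)^2 ∂μ = (∫ s : S, (s:ℝ)^2 ∂μ) - m1^2 := by
    have h1 : (fun s : S => ((s:ℝ) - m1)^2)
        = fun s : S => ((s:ℝ)^2 - 2*m1*(s:ℝ)) + m1^2 := by funext s; ring
    rw [h1, integral_add hi1 (integrable_const _),
      integral_sub hμ2 (hcoe.const_mul _), integral_const_mul, integral_const]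
    simp only [measure_univ, probReal_univ, ENNReal.toReal_one, smul_eq_mul, one_mul, ← hm1]
    ring
  have hnn : 0 ≤ ∫ s : S, ((s:ℝ) - m1)^2 ∂μ :=
    integral_nonneg fun s => sq_nonneg _
  rcases lt_or_eq_of_le hnn with hlt | hzero
  · rw [hexp] at hlt; linarith
  · exfalso
    have hae : (fun s : S => ((s:ℝ) - m1)^2) =ᵐ[μ] 0 :=
      (integral_eq_zero_iff_of_nonneg (fun s => sq_nonneg _) hintf).1 hzero.symm
    have hae' : ∀ᵐ s : S ∂μ, (s:ℝ) = m1 := by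
      filter_upwards [hae] with s hs
      have h2 : ((s:ℝ) - m1)^2 = 0 := hs
      have h3 : (s:ℝ) - m1 = 0 := by
        exact pow_eq_zero_iff (two_ne_zero) |>.1 h2
      linarith
    set A : Set S := {s : S | (s:ℝ) = m1} with hA
    have hms : MeasurableSet A :=
      (measurable_subtype_coe (measurableSet_singleton m1))
    have h0 : μ Aᶜ = 0 := by
      have := ae_iff.1 hae'
      exact this
    have hone : μ A = 1 := by
      have hc := measure_compl hms (measure_ne_top μ A)
      rw [h0, measure_univ] at hc
      have hle : (1:ENNReal) ≤ μ A := by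
        rwa [eq_comm, tsub_eq_zero_iff_le] at hc
      exact le_antisymm prob_le_one hle
    have hnonempty : A.Nonempty := by
      by_contra hem
      rw [Set.not_nonempty_iff_eq_empty] at hem
      rw [hem] at hone
      simp at hone
    obtain ⟨a, ha⟩ := hnonempty
    have hset : A = {a} := by
      ext b
      simp only [hA, Set.mem_setOf_eq, Set.mem_singleton_iff]
      constructor
      · intro hb; exact Subtype.ext (hb.trans ha.symm)
      · rintro rfl; exact ha
    have hsing : μ {a} = 1 := by rw [← hset]; exact hone
    apply hμd a
    ext t ht
    rw [Measure.dirac_apply' _ ht]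
    by_cases hat : a ∈ t
    · rw [Set.indicator_of_mem hat]
      refine le_antisymm prob_le_one ?_
      calc (1:ENNReal) = μ {a} := hsing.symm
        _ ≤ μ t := measure_mono (Set.singleton_subset_iff.2 hat)
    · rw [Set.indicator_of_notMem hat]
      have hsub : t ⊆ {a}ᶜ := fun x hx => by
        simp only [Set.mem_compl_iff, Set.mem_singleton_iff]
        rintro rfl; exact hat hx
      refine le_antisymm ?_ zero_le
      calc μ t ≤ μ {a}ᶜ := measure_mono hsub
        _ = μ Set.univ - μ {a} := measure_compl (measurableSet_singleton a) (measure_ne_top μ _)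
        _ = 0 := by rw [hsing, measure_univ]; simp
/-- **Gradient form of the current (Lemma 2.1).** Under (A1)–(A3), if
`L₀₁η₀ = pη₀ + qη₁ + r` is not identically zero and there is a spatially homogeneous
product probability measure `ν = μ^{⊗ℤ/Nℤ}` with non-Dirac marginal of finite second
moment such that `∫ η₀·(−Lη₀) dν ≥ 0`, then `r = 0`, `q = −p` and `D := −p > 0`;
that is, `L₀₁η₀ = D(η₁ − η₀)` for some `D > 0`. -/
theorem stmt0 (N : ℕ) [NeZero N] (hN : 3 ≤ N) (S : Set ℝ) (hS : S.Nontrivial)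
    (L01 : ((ZMod N → S) → ℝ) →ₗ[ℝ] ((ZMod N → S) → ℝ))
    (hA1 : L01 1 = 0)
    (hA2 : ∀ F G : (ZMod N → S) → ℝ, IsPolyFn S F → IsPolyFn S G → BondInvariant S F →
      L01 (F * G) = F * L01 G)
    (hA3 : ∀ F : (ZMod N → S) → ℝ, IsPolyFn S F → L01 F = swapFn S (L01 (swapFn S F)))
    (p q r : ℝ)
    (hgrad : L01 (coordFn S (0 : ZMod N)) =
      fun η => p * (η 0 : ℝ) + q * (η 1 : ℝ) + r)
    (hne : L01 (coordFn S (0 : ZMod N)) ≠ 0)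
    (μ : Measure S) [IsProbabilityMeasure μ]
    (hμd : ∀ a : S, μ ≠ Measure.dirac a)
    (hμ2 : Integrable (fun s : S => (s : ℝ) ^ 2) μ)
    (hpos : 0 ≤ ∫ η, (η 0 : ℝ) * (-(fullGen L01 (coordFn S (0 : ZMod N)) η))
        ∂(Measure.pi fun _ : ZMod N => μ)) :
    r = 0 ∧ q = -p ∧ 0 < -p := by
  classical
  haveI : Fact (1 < N) := ⟨by omega⟩
  -- ### Algebraic part
  have poly1 : IsPolyFn S (1 : (ZMod N → S) → ℝ) := ⟨1, by simp⟩
  have polyC : ∀ x : ZMod N, IsPolyFn S (coordFn S x) :=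
    fun x => ⟨MvPolynomial.X x, fun η => by simp [coordFn]⟩
  have hzero : ∀ y : ZMod N, y ≠ 0 → y ≠ 1 → L01 (coordFn S y) = 0 := by
    intro y h0 h1
    have hbi : BondInvariant S (coordFn S y) := fun η η' h _ => by
      simp [coordFn, h y h0 h1]
    have h2 := hA2 (coordFn S y) 1 (polyC y) poly1 hbi
    rwa [mul_one, hA1, mul_zero] at h2
  have hswap1 : swapFn S (coordFn S (1 : ZMod N)) = coordFn S 0 := by
    funext η; simp [swapFn, coordFn]
  have hL1 : L01 (coordFn S (1 : ZMod N)) =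
      fun η => p * (η 1 : ℝ) + q * (η 0 : ℝ) + r := by
    rw [hA3 _ (polyC 1), hswap1, hgrad]
    funext η
    simp [swapFn]
  have hsum0 : L01 (coordFn S (0 : ZMod N) + coordFn S 1) = 0 := by
    have hbi : BondInvariant S (coordFn S (0 : ZMod N) + coordFn S 1) := by
      intro η η' _ hsum
      simpa [coordFn] using hsum
    have hpoly : IsPolyFn S (coordFn S (0 : ZMod N) + coordFn S 1) :=
      ⟨MvPolynomial.X 0 + MvPolynomial.X 1, fun η => by simp [coordFn]⟩
    have h2 := hA2 _ 1 hpoly poly1 hbi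
    rwa [mul_one, hA1, mul_zero] at h2
  have hL1' : L01 (coordFn S (1 : ZMod N)) = - L01 (coordFn S (0 : ZMod N)) := by
    have h2 := (map_add L01 (coordFn S (0 : ZMod N)) (coordFn S 1)).symm.trans hsum0
    rw [add_comm] at h2
    exact eq_neg_of_add_eq_zero_left h2
  have key : ∀ s : S, (p + q) * (s:ℝ) + r = 0 := by
    intro s
    have e1 := congrFun hL1 (fun _ => s)
    have e2 := congrFun hL1' (fun _ => s)
    have e3 := congrFun hgrad (fun _ => s)
    simp only [Pi.neg_apply] at e2
    rw [e1, e3] at e2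
    nlinarith [e2]
  obtain ⟨a, ha, b, hb, hab⟩ := hS
  have hq : q = -p := by
    have ka := key ⟨a, ha⟩
    have kb := key ⟨b, hb⟩
    have hd : (p + q) * (a - b) = 0 := by
      simp only at ka kb
      nlinarith [ka, kb]
    rcases mul_eq_zero.1 hd with h | h
    · linarith
    · exact absurd (sub_eq_zero.1 h) hab
  have hr : r = 0 := by
    have ka := key ⟨a, ha⟩
    rw [hq] at ka
    simpa using ka
  subst hr
  subst hq
  have hp0 : p ≠ 0 := by
    intro h
    apply hne
    rw [hgrad]
    funext η
    simp [h]
  refine ⟨rfl, rfl, ?_⟩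
  -- ### Generator computation
  have h01 : (0 : ZMod N) ≠ 1 := zero_ne_one
  have h0m1 : (0 : ZMod N) ≠ -1 := by
    intro h
    have h2 : (1 : ZMod N) = 0 := by
      have := congrArg Neg.neg h
      simpa using this.symm
    exact one_ne_zero h2
  have h0m1' : (0 : ZMod N) ≠ -1 := h0m1
  have h1m1 : (1 : ZMod N) ≠ -1 := by
    intro h
    have h2 : ((2 : ℕ) : ZMod N) = 0 := by
      push_cast
      linear_combination h
    rw [ZMod.natCast_eq_zero_iff] at h2
    have := Nat.le_of_dvd (by norm_num) h2
    omega
  have hshift : ∀ x : ZMod N, shiftFn S (-x) (coordFn S (0 : ZMod N)) = coordFn S (-x) := by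
    intro x; funext η; simp [shiftFn, coordFn]
  have hbz : ∀ x : ZMod N, x ≠ 0 → x ≠ -1 → bondGen L01 x (coordFn S (0 : ZMod N)) = 0 := by
    intro x hx0 hx1
    unfold bondGen
    rw [hshift x, hzero (-x) (by simpa using hx0)
      (by rw [Ne, neg_eq_iff_eq_neg]; exact hx1)]
    funext η
    simp [shiftFn]
  have hb0 : bondGen L01 (0 : ZMod N) (coordFn S (0 : ZMod N))
      = fun η => p * (η 0 : ℝ) + -p * (η 1 : ℝ) + 0 := by
    unfold bondGen
    have h1 : shiftFn S (-(0 : ZMod N)) (coordFn S (0 : ZMod N)) = coordFn S 0 := by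
      funext η; simp [shiftFn, coordFn]
    rw [h1, hgrad]
    funext η
    simp [shiftFn]
  have hbm1 : bondGen L01 (-1 : ZMod N) (coordFn S (0 : ZMod N))
      = fun η => p * (η 0 : ℝ) + -p * (η (-1) : ℝ) + 0 := by
    unfold bondGen
    have h1 : shiftFn S (-(-1 : ZMod N)) (coordFn S (0 : ZMod N)) = coordFn S 1 := by
      funext η; simp [shiftFn, coordFn]
    rw [h1, hL1]
    funext η
    simp [shiftFn]
  have hfull : fullGen L01 (coordFn S (0 : ZMod N))
      = fun η => p * (2 * (η 0 : ℝ) - (η 1 : ℝ) - (η (-1) : ℝ)) := by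
    unfold fullGen
    rw [Fintype.sum_eq_add (0 : ZMod N) (-1 : ZMod N) h0m1
      (fun x hx => hbz x hx.1 hx.2)]
    rw [hb0, hbm1]
    funext η
    simp only [Pi.add_apply]
    ring
  -- ### Integral computation
  set ν := Measure.pi fun _ : ZMod N => μ with hν
  have hmeas : AEStronglyMeasurable (fun s : S => (s:ℝ)) μ :=
    continuous_subtype_val.aestronglyMeasurable
  have hcoe : Integrable (fun s : S => (s:ℝ)) μ := by
    refine Integrable.mono' ((integrable_const (1:ℝ)).add hμ2) hmeas ?_
    refine Filter.Eventually.of_forall fun s => ?_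
    show ‖(s:ℝ)‖ ≤ 1 + (s:ℝ)^2
    rw [Real.norm_eq_abs]
    nlinarith [sq_nonneg (|(s:ℝ)| - 1), sq_abs (s:ℝ)]
  set m1 := ∫ s : S, (s:ℝ) ∂μ with hm1
  set m2 := ∫ s : S, (s:ℝ)^2 ∂μ with hm2
  have hint2 : Integrable (fun η : ZMod N → S => (η 0 : ℝ)^2) ν :=
    integrable_pi_single μ (0 : ZMod N) (fun s : S => (s:ℝ)^2) hμ2
  have hintg1 : Integrable (fun η : ZMod N → S => (η 0 : ℝ) * (η 1 : ℝ)) ν :=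
    integrable_pi_pair μ (0 : ZMod N) 1 h01 _ _ hcoe hcoe
  have hintg2 : Integrable (fun η : ZMod N → S => (η 0 : ℝ) * (η (-1) : ℝ)) ν :=
    integrable_pi_pair μ (0 : ZMod N) (-1) h0m1 _ _ hcoe hcoe
  have e2 : ∫ η : ZMod N → S, (η 0 : ℝ)^2 ∂ν = m2 :=
    integral_pi_single μ (0 : ZMod N) (fun s : S => (s:ℝ)^2)
  have e3 : ∫ η : ZMod N → S, (η 0 : ℝ) * (η 1 : ℝ) ∂ν = m1 * m1 :=
    integral_pi_pair μ (0 : ZMod N) 1 h01 (fun s : S => (s:ℝ)) (fun s : S => (s:ℝ))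
  have e4 : ∫ η : ZMod N → S, (η 0 : ℝ) * (η (-1) : ℝ) ∂ν = m1 * m1 :=
    integral_pi_pair μ (0 : ZMod N) (-1) h0m1 (fun s : S => (s:ℝ)) (fun s : S => (s:ℝ))
  have hIeq : ∫ η : ZMod N → S, (η 0 : ℝ) *
      (-(fullGen L01 (coordFn S (0 : ZMod N)) η)) ∂ν
      = ∫ η : ZMod N → S, ((-2*p) * (η 0 : ℝ)^2
        + (p * ((η 0 : ℝ) * (η 1 : ℝ)) + p * ((η 0 : ℝ) * (η (-1) : ℝ)))) ∂ν := by
    refine integral_congr_ae (Filter.Eventually.of_forall fun η => ?_)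
    rw [hfull]
    ring
  have hsplit : ∫ η : ZMod N → S, ((-2*p) * (η 0 : ℝ)^2
        + (p * ((η 0 : ℝ) * (η 1 : ℝ)) + p * ((η 0 : ℝ) * (η (-1) : ℝ)))) ∂ν
      = (-2*p) * m2 + (p * (m1 * m1) + p * (m1 * m1)) := by
    have hig : Integrable (fun η : ZMod N → S =>
        p * ((η 0 : ℝ) * (η 1 : ℝ)) + p * ((η 0 : ℝ) * (η (-1) : ℝ))) ν :=
      (hintg1.const_mul p).add (hintg2.const_mul p)
    rw [integral_add (hint2.const_mul _) hig,
      integral_add (hintg1.const_mul p) (hintg2.const_mul p),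
      integral_const_mul, integral_const_mul, integral_const_mul, e2, e3, e4]
  rw [hIeq, hsplit] at hpos
  have hvar : 0 < m2 - m1^2 := var_pos_of_not_dirac μ hμd hμ2
  rcases hp0.lt_or_gt with h | h
  · linarith
  · exfalso
    nlinarith [mul_pos h hvar, hpos]
end

section
/- Let N ≥ 4 be an integer and S ⊆ ℝ. Let L₀₁ be a linear operator on real polynomial functions on S^{ℤ/Nℤ} satisfying: (A1) L₀₁1 = 0; (A2) L₀₁(FG) = F·(L₀₁G) whenever F is a polynomial function only of (η_y)_{y≠0,1} and of η₀+η₁; (A3) L₀₁F = σ₀₁(L₀₁(σ₀₁F)); and suppose L₀₁η₀ = D(η₁ − η₀) for some real D, and L₀₁(η₀η₁) = a(η₀² + η₁²) + bη₀η₁ + c(η₀ + η₁) + d for real constants a, b, c, d with a ≠ 0. Set L_{x,x+1} = τ_x L₀₁ τ_{−x} and L = Σ_{x∈ℤ/Nℤ} L_{x,x+1}. Let ν = μ^{⊗ℤ/Nℤ} be a product probability measure on S^{ℤ/Nℤ} whose marginal μ has finite second moment and mean ρ = ∫ s dμ(s), and suppose ∫ L(η₀η₁) dν = 0. Then 2a·∫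 s² dμ(s) + bρ² + 2cρ + d = 0, and consequently the variance of μ equals v₂ρ² + v₁ρ + v₀ where v₂ = −b/(2a) − 1, v₁ = −c/a and v₀ = −d/(2a). -/
open MeasureTheory

section aux

variable {N : ℕ} {S : Set ℝ}

lemma polyX (u : ZMod N) : IsPolyFn S (coordFn S u) :=
  ⟨MvPolynomial.X u, fun η => by simp [coordFn]⟩

lemma polyXX (u v : ZMod N) : IsPolyFn S (coordFn S u * coordFn S v) :=
  ⟨MvPolynomial.X u * MvPolynomial.X v, fun η => by simp [coordFn]⟩

lemma poly1 : IsPolyFn S (1 : (ZMod N → S) → ℝ) := ⟨1, fun η => by simp⟩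

lemma bondX {u : ZMod N} (hu0 : u ≠ 0) (hu1 : u ≠ 1) : BondInvariant S (coordFn S u) := by
  intro η η' h _
  simp only [coordFn]
  rw [h u hu0 hu1]

lemma bondXX {u v : ZMod N} (hu0 : u ≠ 0) (hu1 : u ≠ 1) (hv0 : v ≠ 0) (hv1 : v ≠ 1) :
    BondInvariant S (coordFn S u * coordFn S v) := by
  intro η η' h _
  simp only [Pi.mul_apply, coordFn]
  rw [h u hu0 hu1, h v hv0 hv1]

end aux

/-- **Quadratic variance function (first part of Theorem 2.1).** Under (A1)–(A3), the
gradient condition `L₀₁η₀ = D(η₁ − η₀)`, and the degree-two condition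
`L₀₁(η₀η₁) = a(η₀² + η₁²) + bη₀η₁ + c(η₀ + η₁) + d` with `a ≠ 0`, if a spatially
homogeneous product probability measure `ν = μ^{⊗ℤ/Nℤ}` with second moments and
mean `ρ` satisfies `∫ L(η₀η₁) dν = 0`, then `2a∫s²dμ + bρ² + 2cρ + d = 0`; hence
`Var(μ) = v₂ρ² + v₁ρ + v₀` with `v₂ = −b/(2a) − 1`, `v₁ = −c/a`, `v₀ = −d/(2a)`. -/
theorem stmt1 (N : ℕ) [NeZero N] (hN : 4 ≤ N) (S : Set ℝ)
    (L01 : ((ZMod N → S) → ℝ) →ₗ[ℝ] ((ZMod N → S) → ℝ))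
    (hA1 : L01 1 = 0)
    (hA2 : ∀ F G : (ZMod N → S) → ℝ, IsPolyFn S F → IsPolyFn S G → BondInvariant S F →
      L01 (F * G) = F * L01 G)
    (hA3 : ∀ F : (ZMod N → S) → ℝ, IsPolyFn S F → L01 F = swapFn S (L01 (swapFn S F)))
    (D a b c d : ℝ) (ha : a ≠ 0)
    (hgrad : L01 (coordFn S (0 : ZMod N)) = fun η => D * ((η 1 : ℝ) - (η 0 : ℝ)))
    (hquad : L01 (coordFn S (0 : ZMod N) * coordFn S (1 : ZMod N)) =
      fun η => a * ((η 0 : ℝ) ^ 2 + (η 1 : ℝ) ^ 2) + b * ((η 0 : ℝ) * (η 1 : ℝ))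
        + c * ((η 0 : ℝ) + (η 1 : ℝ)) + d)
    (μ : Measure S) [IsProbabilityMeasure μ]
    (hμ2 : Integrable (fun s : S => (s : ℝ) ^ 2) μ)
    (ρ : ℝ) (hρ : ρ = ∫ s, (s : ℝ) ∂μ)
    (hstat : ∫ η, fullGen L01 (coordFn S (0 : ZMod N) * coordFn S (1 : ZMod N)) η
        ∂(Measure.pi fun _ : ZMod N => μ) = 0) :
    2 * a * (∫ s, (s : ℝ) ^ 2 ∂μ) + b * ρ ^ 2 + 2 * c * ρ + d = 0 ∧
      (∫ s, (s : ℝ) ^ 2 ∂μ) - ρ ^ 2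
        = (-b / (2 * a) - 1) * ρ ^ 2 + (-c / a) * ρ + (-d / (2 * a)) := by
  -- distinctness facts in ZMod N
  have hcast : ∀ k : ℕ, 0 < k → k < N → ((k : ZMod N) ≠ 0) := by
    intro k hk hkN h
    rw [ZMod.natCast_eq_zero_iff] at h
    exact absurd (Nat.le_of_dvd hk h) (by omega)
  have h10 : (1 : ZMod N) ≠ 0 := by
    have := hcast 1 (by omega) (by omega); simpa using this
  have h20 : (2 : ZMod N) ≠ 0 := by
    have := hcast 2 (by omega) (by omega); simpa using this
  have h01 : (0 : ZMod N) ≠ 1 := fun h => h10 h.symm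
  have h21 : (2 : ZMod N) ≠ 1 := fun h => h10 (by linear_combination h)
  have hm10 : (-1 : ZMod N) ≠ 0 := fun h => h10 (by linear_combination -h)
  have hm11 : (-1 : ZMod N) ≠ 1 := fun h => h20 (by linear_combination -h)
  have h1m1 : (1 : ZMod N) ≠ -1 := fun h => hm11 h.symm
  have h02 : (0 : ZMod N) ≠ 2 := fun h => h20 h.symm
  have h12 : (1 : ZMod N) ≠ 2 := fun h => h21 h.symm
  have h0m1 : (0 : ZMod N) ≠ -1 := fun h => hm10 h.symm
  set f0 : (ZMod N → S) → ℝ := coordFn S (0 : ZMod N) * coordFn S (1 : ZMod N) with hf0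
  -- bond generators away from {0,1,-1} vanish on f0
  have hkill : ∀ x : ZMod N, x ≠ 0 → x ≠ 1 → x ≠ -1 → bondGen L01 x f0 = 0 := by
    intro x hx0 hx1 hxm1
    have hs : shiftFn S (-x) f0 = coordFn S (-x) * coordFn S (1 - x) := by
      funext η
      simp only [shiftFn, hf0, Pi.mul_apply, coordFn]
      rw [zero_add, show (1 : ZMod N) + -x = 1 - x from by ring]
    have hF0 : (-x : ZMod N) ≠ 0 := fun h => hx0 (by linear_combination -h)
    have hF1 : (-x : ZMod N) ≠ 1 := fun h => hxm1 (by linear_combination -h)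
    have hG0 : (1 - x : ZMod N) ≠ 0 := fun h => hx1 (by linear_combination -h)
    have hG1 : (1 - x : ZMod N) ≠ 1 := fun h => hx0 (by linear_combination -h)
    have := hA2 (coordFn S (-x) * coordFn S (1 - x)) 1 (polyXX _ _) poly1
      (bondXX hF0 hF1 hG0 hG1)
    rw [mul_one, hA1, mul_zero] at this
    rw [bondGen, hs, this]
    rfl
  have hshift0 : ∀ f : (ZMod N → S) → ℝ, shiftFn S (0 : ZMod N) f = f := by
    intro f; funext η; simp only [shiftFn, add_zero]
  -- bond at 0
  have hb0 : bondGen L01 (0 : ZMod N) f0 =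
      fun η => a * ((η 0 : ℝ) ^ 2 + (η 1 : ℝ) ^ 2) + b * ((η 0 : ℝ) * (η 1 : ℝ))
        + c * ((η 0 : ℝ) + (η 1 : ℝ)) + d := by
    rw [bondGen, neg_zero, hshift0, hshift0, hf0, hquad]
  -- bond at 1
  have hb1 : bondGen L01 (1 : ZMod N) f0 =
      fun η => (η 0 : ℝ) * (D * ((η 2 : ℝ) - (η 1 : ℝ))) := by
    have hs : shiftFn S (-1 : ZMod N) f0 = coordFn S (-1) * coordFn S 0 := by
      funext η
      simp only [shiftFn, hf0, Pi.mul_apply, coordFn]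
      rw [zero_add, show (1 : ZMod N) + -1 = 0 from by ring]
    rw [bondGen, hs, hA2 _ _ (polyX _) (polyX _) (bondX hm10 hm11), hgrad]
    funext η
    simp only [shiftFn, Pi.mul_apply, coordFn]
    rw [show (-1 : ZMod N) + 1 = 0 from by ring, zero_add,
      show (1 : ZMod N) + 1 = 2 from by ring]
  -- bond at -1
  have hb1' : bondGen L01 (-1 : ZMod N) f0 =
      fun η => (η 1 : ℝ) * (D * ((η (-1) : ℝ) - (η 0 : ℝ))) := by
    have hs : shiftFn S (-(-1) : ZMod N) f0 = coordFn S 2 * coordFn S 1 := by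
      funext η
      simp only [shiftFn, hf0, Pi.mul_apply, coordFn, neg_neg]
      rw [zero_add, show (1 : ZMod N) + 1 = 2 from by ring, mul_comm]
    have hswX1 : swapFn S (coordFn S (1 : ZMod N)) = coordFn S 0 := by
      funext η; simp [swapFn, coordFn, Equiv.swap_apply_right]
    have hLX1 : L01 (coordFn S (1 : ZMod N)) = fun η => D * ((η 0 : ℝ) - (η 1 : ℝ)) := by
      rw [hA3 _ (polyX 1), hswX1, hgrad]
      funext η
      simp [swapFn, Equiv.swap_apply_left, Equiv.swap_apply_right]
    rw [bondGen, hs, hA2 _ _ (polyX _) (polyX _) (bondX h20 h21), hLX1]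
    funext η
    simp only [shiftFn, Pi.mul_apply, coordFn]
    rw [show (2 : ZMod N) + -1 = 1 from by ring, zero_add,
      show (1 : ZMod N) + -1 = 0 from by ring]
  -- the full generator
  have hfull : fullGen L01 f0 = fun η =>
      (a * ((η 0 : ℝ) ^ 2 + (η 1 : ℝ) ^ 2) + b * ((η 0 : ℝ) * (η 1 : ℝ))
        + c * ((η 0 : ℝ) + (η 1 : ℝ)) + d)
      + (η 0 : ℝ) * (D * ((η 2 : ℝ) - (η 1 : ℝ)))
      + (η 1 : ℝ) * (D * ((η (-1) : ℝ) - (η 0 : ℝ))) := by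
    rw [fullGen,
      ← Finset.sum_subset
        (Finset.subset_univ (insert 0 (insert 1 ({-1} : Finset (ZMod N)))))
        (fun x _ hx => by
          simp only [Finset.mem_insert, Finset.mem_singleton, not_or] at hx
          exact hkill x hx.1 hx.2.1 hx.2.2),
      Finset.sum_insert (by simp [h01, h0m1]), Finset.sum_insert (by simp [h1m1]),
      Finset.sum_singleton, hb0, hb1, hb1']
    funext η
    simp only [Pi.add_apply]
    ring
  -- Integration over the product measure
  letI : MeasureSpace S := ⟨μ⟩
  haveI : SigmaFinite (volume : Measure S) := inferInstanceAs (SigmaFinite μ)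
  haveI : IsProbabilityMeasure (volume : Measure S) := inferInstanceAs (IsProbabilityMeasure μ)
  have hvol : (Measure.pi fun _ : ZMod N => μ) = (volume : Measure (ZMod N → S)) := rfl
  have hμ1 : Integrable (fun s : S => (s : ℝ)) μ := by
    refine (hμ2.add (integrable_const 1)).mono'
      measurable_subtype_coe.aestronglyMeasurable ?_
    filter_upwards with s
    have : |(s : ℝ)| ≤ (s : ℝ) ^ 2 + 1 := by nlinarith [sq_nonneg (|(s : ℝ)| - 1), sq_abs (s : ℝ)]
    simpa [Real.norm_eq_abs] using this
  -- one-coordinate integrals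
  have key1 : ∀ (g : S → ℝ), Integrable g μ → ∀ u : ZMod N,
      (Integrable (fun η : ZMod N → S => g (η u)) (Measure.pi fun _ : ZMod N => μ)) ∧
      (∫ η : ZMod N → S, g (η u) ∂(Measure.pi fun _ : ZMod N => μ) = ∫ s, g s ∂μ) := by
    intro g hg u
    classical
    set f : ZMod N → S → ℝ := fun i => if i = u then g else fun _ => 1 with hf
    have hprod : (fun η : ZMod N → S => g (η u)) = fun η => ∏ i, f i (η i) := by
      funext η
      rw [Finset.prod_eq_single u (fun i _ hi => by simp [hf, hi]) (by simp)]
      simp [hf]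
    have hfi : ∀ i, Integrable (f i) (volume : Measure S) := by
      intro i
      by_cases hi : i = u
      · rw [hf]; simp only [if_pos hi]; exact hg
      · rw [hf]; simp only [if_neg hi]; exact integrable_const 1
    constructor
    · rw [hprod, hvol]
      exact Integrable.fintype_prod hfi
    · rw [hprod, hvol]
      rw [show (∫ η : ZMod N → S, ∏ i, f i (η i) ∂(volume : Measure (ZMod N → S)))
          = ∏ i, ∫ s, f i s ∂(volume : Measure S) from
        MeasureTheory.integral_fintype_prod_eq_prod f]
      rw [Finset.prod_eq_single u (fun i _ hi => by simp [hf, hi]) (by simp)]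
      simp only [hf, if_pos rfl]
      rfl
  -- two-coordinate integrals
  have key2 : ∀ (u v : ZMod N), u ≠ v →
      (Integrable (fun η : ZMod N → S => (η u : ℝ) * (η v : ℝ)) (Measure.pi fun _ : ZMod N => μ)) ∧
      (∫ η : ZMod N → S, (η u : ℝ) * (η v : ℝ) ∂(Measure.pi fun _ : ZMod N => μ) = ρ * ρ) := by
    intro u v huv
    classical
    set f : ZMod N → S → ℝ :=
      fun i => if i = u then (fun s => (s : ℝ)) else if i = v then (fun s => (s : ℝ))
        else fun _ => 1 with hf
    have hvmem : v ∈ Finset.univ.erase u := Finset.mem_erase.2 ⟨huv.symm, Finset.mem_univ v⟩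
    have hprodgen : ∀ (T : ZMod N → ℝ), (∀ i, i ≠ u → i ≠ v → T i = 1) →
        ∏ i, T i = T u * T v := by
      intro T hT
      rw [← Finset.mul_prod_erase _ _ (Finset.mem_univ u),
        ← Finset.mul_prod_erase _ _ hvmem,
        Finset.prod_eq_one (fun i hi => by
          have hiv : i ≠ v := (Finset.mem_erase.1 hi).1
          have hiu : i ≠ u := (Finset.mem_erase.1 (Finset.mem_erase.1 hi).2).1
          exact hT i hiu hiv), mul_one]
    have hfu : f u = fun s : S => (s : ℝ) := by simp [hf]
    have hfv : f v = fun s : S => (s : ℝ) := by simp [hf, huv.symm]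
    have hprod : (fun η : ZMod N → S => (η u : ℝ) * (η v : ℝ)) = fun η => ∏ i, f i (η i) := by
      funext η
      rw [hprodgen (fun i => f i (η i)) (fun i hiu hiv => by simp [hf, hiu, hiv]), hfu, hfv]
    have hfi : ∀ i, Integrable (f i) (volume : Measure S) := by
      intro i
      by_cases h1 : i = u
      · rw [hf]; simp only [if_pos h1]; exact hμ1
      · by_cases h2 : i = v
        · rw [hf]; simp only [if_neg h1, if_pos h2]; exact hμ1
        · rw [hf]; simp only [if_neg h1, if_neg h2]; exact integrable_const 1
    constructor
    · rw [hprod, hvol]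
      exact Integrable.fintype_prod hfi
    · rw [hprod, hvol]
      rw [show (∫ η : ZMod N → S, ∏ i, f i (η i) ∂(volume : Measure (ZMod N → S)))
          = ∏ i, ∫ s, f i s ∂(volume : Measure S) from
        MeasureTheory.integral_fintype_prod_eq_prod f]
      rw [hprodgen (fun i => ∫ s, f i s ∂(volume : Measure S))
        (fun i hiu hiv => by simp [hf, hiu, hiv]), hfu, hfv, hρ]
      rfl
  -- assemble the integral
  set ν := (Measure.pi fun _ : ZMod N => μ) with hν
  haveI : IsProbabilityMeasure ν := by rw [hν]; infer_instance
  set m₂ := ∫ s, (s : ℝ) ^ 2 ∂μ with hm₂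
  have iQ0 : Integrable (fun η : ZMod N → S => ((η 0 : ℝ)) ^ 2) ν :=
    (key1 (fun s => (s : ℝ) ^ 2) hμ2 0).1
  have iQ1 : Integrable (fun η : ZMod N → S => ((η 1 : ℝ)) ^ 2) ν :=
    (key1 (fun s => (s : ℝ) ^ 2) hμ2 1).1
  have iT0 : Integrable (fun η : ZMod N → S => ((η 0 : ℝ))) ν :=
    (key1 (fun s => (s : ℝ)) hμ1 0).1
  have iT1 : Integrable (fun η : ZMod N → S => ((η 1 : ℝ))) ν :=
    (key1 (fun s => (s : ℝ)) hμ1 1).1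
  have vQ0 : (∫ η : ZMod N → S, ((η 0 : ℝ)) ^ 2 ∂ν) = m₂ := (key1 (fun s => (s : ℝ) ^ 2) hμ2 0).2
  have vQ1 : (∫ η : ZMod N → S, ((η 1 : ℝ)) ^ 2 ∂ν) = m₂ := (key1 (fun s => (s : ℝ) ^ 2) hμ2 1).2
  have vT0 : (∫ η : ZMod N → S, ((η 0 : ℝ)) ∂ν) = ρ := by
    rw [hρ]; exact (key1 (fun s => (s : ℝ)) hμ1 0).2
  have vT1 : (∫ η : ZMod N → S, ((η 1 : ℝ)) ∂ν) = ρ := by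
    rw [hρ]; exact (key1 (fun s => (s : ℝ)) hμ1 1).2
  obtain ⟨iP01, vP01⟩ := key2 0 1 h01
  obtain ⟨iP02, vP02⟩ := key2 0 2 h02
  obtain ⟨iP1m1, vP1m1⟩ := key2 1 (-1) h1m1
  obtain ⟨iP10, vP10⟩ := key2 1 0 h10
  have hre : (fun η : ZMod N → S => fullGen L01 f0 η) = fun η =>
      a * ((η 0 : ℝ)) ^ 2 + (a * ((η 1 : ℝ)) ^ 2 + (b * ((η 0 : ℝ) * (η 1 : ℝ)) +
        (c * ((η 0 : ℝ)) + (c * ((η 1 : ℝ)) + (d + (D * ((η 0 : ℝ) * (η 2 : ℝ)) +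
          ((-D) * ((η 0 : ℝ) * (η 1 : ℝ)) + (D * ((η 1 : ℝ) * (η (-1) : ℝ)) +
            (-D) * ((η 1 : ℝ) * (η 0 : ℝ)))))))))) := by
    rw [hfull]; funext η; ring
  have s10 : Integrable (fun η : ZMod N → S => (-D) * ((η 1 : ℝ) * (η 0 : ℝ))) ν :=
    iP10.const_mul (-D)
  have s9 : Integrable (fun η : ZMod N → S =>
      D * ((η 1 : ℝ) * (η (-1) : ℝ)) + (-D) * ((η 1 : ℝ) * (η 0 : ℝ))) ν :=
    (iP1m1.const_mul D).add s10
  have s8 : Integrable (fun η : ZMod N → S =>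
      (-D) * ((η 0 : ℝ) * (η 1 : ℝ)) + (D * ((η 1 : ℝ) * (η (-1) : ℝ)) +
        (-D) * ((η 1 : ℝ) * (η 0 : ℝ)))) ν :=
    (iP01.const_mul (-D)).add s9
  have s7 : Integrable (fun η : ZMod N → S =>
      D * ((η 0 : ℝ) * (η 2 : ℝ)) + ((-D) * ((η 0 : ℝ) * (η 1 : ℝ)) +
        (D * ((η 1 : ℝ) * (η (-1) : ℝ)) + (-D) * ((η 1 : ℝ) * (η 0 : ℝ))))) ν :=
    (iP02.const_mul D).add s8
  have s6 : Integrable (fun η : ZMod N → S =>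
      d + (D * ((η 0 : ℝ) * (η 2 : ℝ)) + ((-D) * ((η 0 : ℝ) * (η 1 : ℝ)) +
        (D * ((η 1 : ℝ) * (η (-1) : ℝ)) + (-D) * ((η 1 : ℝ) * (η 0 : ℝ)))))) ν :=
    (integrable_const (μ := ν) d).add s7
  have s5 : Integrable (fun η : ZMod N → S =>
      c * ((η 1 : ℝ)) + (d + (D * ((η 0 : ℝ) * (η 2 : ℝ)) + ((-D) * ((η 0 : ℝ) * (η 1 : ℝ)) +
        (D * ((η 1 : ℝ) * (η (-1) : ℝ)) + (-D) * ((η 1 : ℝ) * (η 0 : ℝ))))))) ν :=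
    (iT1.const_mul c).add s6
  have s4 : Integrable (fun η : ZMod N → S =>
      c * ((η 0 : ℝ)) + (c * ((η 1 : ℝ)) + (d + (D * ((η 0 : ℝ) * (η 2 : ℝ)) +
        ((-D) * ((η 0 : ℝ) * (η 1 : ℝ)) + (D * ((η 1 : ℝ) * (η (-1) : ℝ)) +
          (-D) * ((η 1 : ℝ) * (η 0 : ℝ)))))))) ν :=
    (iT0.const_mul c).add s5
  have s3 : Integrable (fun η : ZMod N → S =>
      b * ((η 0 : ℝ) * (η 1 : ℝ)) + (c * ((η 0 : ℝ)) + (c * ((η 1 : ℝ)) +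
        (d + (D * ((η 0 : ℝ) * (η 2 : ℝ)) + ((-D) * ((η 0 : ℝ) * (η 1 : ℝ)) +
          (D * ((η 1 : ℝ) * (η (-1) : ℝ)) + (-D) * ((η 1 : ℝ) * (η 0 : ℝ))))))))) ν :=
    (iP01.const_mul b).add s4
  have s2 : Integrable (fun η : ZMod N → S =>
      a * ((η 1 : ℝ)) ^ 2 + (b * ((η 0 : ℝ) * (η 1 : ℝ)) + (c * ((η 0 : ℝ)) +
        (c * ((η 1 : ℝ)) + (d + (D * ((η 0 : ℝ) * (η 2 : ℝ)) +
          ((-D) * ((η 0 : ℝ) * (η 1 : ℝ)) + (D * ((η 1 : ℝ) * (η (-1) : ℝ)) +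
            (-D) * ((η 1 : ℝ) * (η 0 : ℝ)))))))))) ν :=
    (iQ1.const_mul a).add s3
  have hI : (∫ η, fullGen L01 f0 η ∂ν) = 2 * a * m₂ + b * ρ ^ 2 + 2 * c * ρ + d := by
    rw [show (∫ η, fullGen L01 f0 η ∂ν) = _ from congrArg (fun F => ∫ η, F η ∂ν) hre]
    rw [integral_add (iQ0.const_mul a) s2, integral_add (iQ1.const_mul a) s3,
      integral_add (iP01.const_mul b) s4, integral_add (iT0.const_mul c) s5,
      integral_add (iT1.const_mul c) s6, integral_add (integrable_const d) s7,
      integral_add (iP02.const_mul D) s8, integral_add (iP01.const_mul (-D)) s9,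
      integral_add (iP1m1.const_mul D) s10]
    rw [integral_const_mul, integral_const_mul, integral_const_mul, integral_const_mul,
      integral_const_mul, integral_const_mul, integral_const_mul, integral_const_mul,
      integral_const_mul, integral_const]
    rw [vQ0, vQ1, vT0, vT1, vP01, vP02, vP1m1, vP10]
    simp [measure_univ]
    ring
  rw [hI] at hstat
  refine ⟨hstat, ?_⟩
  field_simp
  linear_combination hstat
end

section
/- Let N ≥ 3 be an integer and S ⊆ ℝ. For each x ∈ ℤ/Nℤ let L_{x,x+1} = τ_x L₀₁ τ_{−x}, where L₀₁ is a linear operator on real polynomial functions on S^{ℤ/Nℤ} satisfying: (A1) L₀₁1 = 0; (A2) L₀₁(FG) = F·(L₀₁G) whenever F is a polynomial function only of (η_y)_{y≠0,1} and of η₀+η₁; (A3) L₀₁F = σ₀₁(L₀₁(σ₀₁F)); and L₀₁η₀ = D(η₁ − η₀) for a real constant D. Set L = Σ_{x∈ℤ/Nℤ} L_{x,x+1}. Then for every function G: ℤ/Nℤ → ℝ, writing f(η) = Σ_{x∈ℤ/Nℤ} G(x)η_x, the carré du champ satisfies, as an identity of functions on S^{ℤ/Nℤ}: L(f²) − 2f·(Lf)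 = Σ_{x∈ℤ/Nℤ} (G(x+1) − G(x))² · [ D(η_x − η_{x+1})² − L_{x,x+1}(η_x η_{x+1}) ]. -/
open MeasureTheory

open MvPolynomial in
lemma stmt3_core {N : ℕ} {S : Set ℝ} (h01 : (0 : ZMod N) ≠ 1)
    (L01 : ((ZMod N → S) → ℝ) →ₗ[ℝ] ((ZMod N → S) → ℝ))
    (hA1 : L01 1 = 0)
    (hA2 : ∀ F G : (ZMod N → S) → ℝ, IsPolyFn S F → IsPolyFn S G → BondInvariant S F →
      L01 (F * G) = F * L01 G)
    (hA3 : ∀ F : (ZMod N → S) → ℝ, IsPolyFn S F → L01 F = swapFn S (L01 (swapFn S F)))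
    (D : ℝ)
    (hgrad : L01 (coordFn S (0 : ZMod N)) = fun η => D * ((η 1 : ℝ) - (η 0 : ℝ)))
    (a b : ℝ) (R : (ZMod N → S) → ℝ) (hRp : IsPolyFn S R) (hRb : BondInvariant S R)
    (ξ : ZMod N → S) :
    L01 ((fun ζ => a * (ζ 0 : ℝ) + b * (ζ 1 : ℝ) + R ζ) *
         (fun ζ => a * (ζ 0 : ℝ) + b * (ζ 1 : ℝ) + R ζ)) ξ
      - 2 * (a * (ξ 0 : ℝ) + b * (ξ 1 : ℝ) + R ξ) *
          L01 (fun ζ => a * (ζ 0 : ℝ) + b * (ζ 1 : ℝ) + R ζ) ξ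
    = (b - a) ^ 2 *
        (D * ((ξ 0 : ℝ) - (ξ 1 : ℝ)) ^ 2 - L01 (coordFn S 0 * coordFn S 1) ξ) := by
  obtain ⟨P, hP⟩ := hRp
  set κ : ℝ := (b - a) / 2 with hκ
  set h : (ZMod N → S) → ℝ := fun ζ => ((a + b) / 2) * ((ζ 0 : ℝ) + (ζ 1 : ℝ)) + R ζ with hh
  set d : (ZMod N → S) → ℝ := fun ζ => ((ζ 1 : ℝ) - (ζ 0 : ℝ)) with hd
  set s : (ZMod N → S) → ℝ := fun ζ => ((ζ 0 : ℝ) + (ζ 1 : ℝ)) with hs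
  -- polynomiality facts
  have poly1 : IsPolyFn S (1 : (ZMod N → S) → ℝ) := ⟨1, fun η => by simp⟩
  have hhp : IsPolyFn S h :=
    ⟨C ((a + b) / 2) * (X 0 + X 1) + P, fun η => by simp [hh, hP]⟩
  have hdp : IsPolyFn S d := ⟨X 1 - X 0, fun η => by simp [hd]⟩
  have hsp : IsPolyFn S s := ⟨X 0 + X 1, fun η => by simp [hs]⟩
  have hmulp : ∀ f g : (ZMod N → S) → ℝ, IsPolyFn S f → IsPolyFn S g → IsPolyFn S (f * g) := by
    rintro f g ⟨Pf, hf⟩ ⟨Pg, hg⟩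
    exact ⟨Pf * Pg, fun η => by simp [Pi.mul_apply, hf, hg]⟩
  -- bond invariance facts
  have hhb : BondInvariant S h := by
    intro η η' hy hsum
    simp only [hh]
    rw [hsum, hRb η η' hy hsum]
  have hsb : BondInvariant S s := by
    intro η η' hy hsum
    simpa only [hs] using hsum
  have hh2b : BondInvariant S (h * h) := by
    intro η η' hy hsum
    simp only [Pi.mul_apply]
    rw [hhb η η' hy hsum]
  have hs2b : BondInvariant S (s * s) := by
    intro η η' hy hsum
    simp only [Pi.mul_apply]
    rw [hsb η η' hy hsum]
  -- L01 kills bond-invariant polynomial functions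
  have Lzero : ∀ F : (ZMod N → S) → ℝ, IsPolyFn S F → BondInvariant S F → L01 F = 0 := by
    intro F hFp hFb
    have h2 := hA2 F 1 hFp poly1 hFb
    rwa [mul_one, hA1, mul_zero] at h2
  have hLh : L01 h = 0 := Lzero h hhp hhb
  have hLh2 : L01 (h * h) = 0 := Lzero _ (hmulp h h hhp hhp) hh2b
  have hLs2 : L01 (s * s) = 0 := Lzero _ (hmulp s s hsp hsp) hs2b
  -- gradient condition at site 1 via the swap symmetry
  have hLe1 : L01 (coordFn S 1) = fun η => D * ((η 0 : ℝ) - (η 1 : ℝ)) := by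
    have hswap : swapFn S (coordFn S (1 : ZMod N)) = coordFn S 0 := by
      funext η
      simp [swapFn, coordFn, Equiv.swap_apply_right]
    rw [hA3 (coordFn S 1) ⟨X 1, fun η => by simp [coordFn]⟩, hswap, hgrad]
    funext η
    simp [swapFn, Equiv.swap_apply_left, Equiv.swap_apply_right]
  have hdsub : d = coordFn S 1 - coordFn S 0 := by
    funext ζ
    simp [hd, coordFn, Pi.sub_apply]
  have hLd : L01 d = fun η => (-2 * D) * ((η 1 : ℝ) - (η 0 : ℝ)) := by
    rw [hdsub, map_sub, hgrad, hLe1]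
    funext η
    simp only [Pi.sub_apply]
    ring
  have hLhd : L01 (h * d) = h * L01 d := hA2 h d hhp hdp hhb
  -- decompositions
  have hf0 : (fun ζ => a * (ζ 0 : ℝ) + b * (ζ 1 : ℝ) + R ζ) = h + κ • d := by
    funext ζ
    simp only [hh, hd, hκ, Pi.add_apply, Pi.smul_apply, smul_eq_mul]
    ring
  have hdd : d * d = s * s - (4 : ℝ) • (coordFn S 0 * coordFn S 1) := by
    funext ζ
    simp only [hd, hs, coordFn, Pi.mul_apply, Pi.sub_apply, Pi.smul_apply, smul_eq_mul]
    ring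
  have hff : (h + κ • d) * (h + κ • d)
      = h * h + (2 * κ) • (h * d) + (κ * κ) • (d * d) := by
    funext ζ
    simp only [Pi.mul_apply, Pi.add_apply, Pi.smul_apply, smul_eq_mul]
    ring
  have K1 : L01 ((h + κ • d) * (h + κ • d)) ξ
      = 2 * κ * (h ξ * L01 d ξ) - 4 * (κ * κ) * L01 (coordFn S 0 * coordFn S 1) ξ := by
    rw [hff, hdd]
    rw [map_add, map_add, _root_.map_smul, _root_.map_smul, map_sub, _root_.map_smul, hLh2, hLs2, hLhd]
    simp only [Pi.add_apply, Pi.sub_apply, Pi.smul_apply, Pi.mul_apply, Pi.zero_apply,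
      smul_eq_mul]
    ring
  have K2 : L01 (h + κ • d) ξ = κ * L01 d ξ := by
    rw [map_add, _root_.map_smul, hLh]
    simp [smul_eq_mul]
  have hmid : a * (ξ 0 : ℝ) + b * (ξ 1 : ℝ) + R ξ = h ξ + κ * d ξ := by
    simp only [hh, hd, hκ]
    ring
  have hLdξ : L01 d ξ = -2 * D * ((ξ 1 : ℝ) - (ξ 0 : ℝ)) := by rw [hLd]
  rw [hf0, hmid, K1, K2, hLdξ]
  simp only [hh, hd, hκ]
  ring

/-- **Explicit form of the carré du champ (Lemma 4.2).** Under (A1)–(A3) and the gradient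
condition `L₀₁η₀ = D(η₁ − η₀)`, for every `G : ℤ/Nℤ → ℝ` and `f(η) = Σ_x G(x)η_x`:
`L(f²) − 2f·Lf = Σ_x (G(x+1) − G(x))²·[D(η_x − η_{x+1})² − L_{x,x+1}(η_x η_{x+1})]`
as an identity of functions on `S^(ℤ/Nℤ)`. -/
theorem stmt3 (N : ℕ) [NeZero N] (hN : 3 ≤ N) (S : Set ℝ)
    (L01 : ((ZMod N → S) → ℝ) →ₗ[ℝ] ((ZMod N → S) → ℝ))
    (hA1 : L01 1 = 0)
    (hA2 : ∀ F G : (ZMod N → S) → ℝ, IsPolyFn S F → IsPolyFn S G → BondInvariant S F →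
      L01 (F * G) = F * L01 G)
    (hA3 : ∀ F : (ZMod N → S) → ℝ, IsPolyFn S F → L01 F = swapFn S (L01 (swapFn S F)))
    (D : ℝ)
    (hgrad : L01 (coordFn S (0 : ZMod N)) = fun η => D * ((η 1 : ℝ) - (η 0 : ℝ)))
    (G : ZMod N → ℝ) :
    ∀ η : ZMod N → S,
      fullGen L01
          ((fun ζ => ∑ x : ZMod N, G x * (ζ x : ℝ)) * fun ζ => ∑ x : ZMod N, G x * (ζ x : ℝ)) η
        - 2 * (∑ x : ZMod N, G x * (η x : ℝ)) *
            fullGen L01 (fun ζ => ∑ x : ZMod N, G x * (ζ x : ℝ)) η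
      = ∑ x : ZMod N, (G (x + 1) - G x) ^ 2 *
          (D * ((η x : ℝ) - (η (x + 1) : ℝ)) ^ 2
            - bondGen L01 x (coordFn S x * coordFn S (x + 1)) η) := by
  intro η
  haveI : Fact (1 < N) := ⟨by omega⟩
  have h01 : (0 : ZMod N) ≠ 1 := zero_ne_one
  set f : (ZMod N → S) → ℝ := fun ζ => ∑ x : ZMod N, G x * (ζ x : ℝ) with hf
  have hfull : ∀ g : (ZMod N → S) → ℝ, fullGen L01 g η = ∑ x : ZMod N, bondGen L01 x g η := by
    intro g
    simp [fullGen, Finset.sum_apply]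
  rw [hfull, hfull, Finset.mul_sum, ← Finset.sum_sub_distrib]
  apply Finset.sum_congr rfl
  intro x _
  set ξ : ZMod N → S := fun z => η (z + x) with hξ
  have hred : ∀ g : (ZMod N → S) → ℝ, bondGen L01 x g η = L01 (shiftFn S (-x) g) ξ :=
    fun g => rfl
  set Rx : (ZMod N → S) → ℝ :=
    fun ζ => ∑ w ∈ (Finset.univ \ {0, 1} : Finset (ZMod N)), G (w + x) * (ζ w : ℝ) with hRx
  have hRxp : IsPolyFn S Rx :=
    ⟨∑ w ∈ (Finset.univ \ {0, 1} : Finset (ZMod N)),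
        MvPolynomial.C (G (w + x)) * MvPolynomial.X w,
      fun η => by simp [hRx, MvPolynomial.eval_sum]⟩
  have hRxb : BondInvariant S Rx := by
    intro η η' hy hsum
    simp only [hRx]
    apply Finset.sum_congr rfl
    intro w hw
    simp only [Finset.mem_sdiff, Finset.mem_insert, Finset.mem_singleton] at hw
    rw [hy w (fun hc => hw.2 (Or.inl hc)) (fun hc => hw.2 (Or.inr hc))]
  have hshift_f : shiftFn S (-x) f
      = fun ζ => G x * (ζ 0 : ℝ) + G (x + 1) * (ζ 1 : ℝ) + Rx ζ := by
    funext ζ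
    simp only [shiftFn, hf]
    rw [Fintype.sum_equiv (Equiv.addRight (-x)) _ (fun w => G (w + x) * (ζ w : ℝ))
      (fun y => by simp)]
    rw [← Finset.sum_sdiff (Finset.subset_univ ({0, 1} : Finset (ZMod N)))]
    rw [Finset.sum_pair h01]
    simp only [zero_add]
    rw [show (1 : ZMod N) + x = x + 1 from add_comm 1 x]
    ring
  have hshift_ff : shiftFn S (-x) (f * f)
      = (fun ζ => G x * (ζ 0 : ℝ) + G (x + 1) * (ζ 1 : ℝ) + Rx ζ) *
        (fun ζ => G x * (ζ 0 : ℝ) + G (x + 1) * (ζ 1 : ℝ) + Rx ζ) := by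
    rw [show shiftFn S (-x) (f * f) = shiftFn S (-x) f * shiftFn S (-x) f from rfl, hshift_f]
  have hshift_c : shiftFn S (-x) (coordFn S x * coordFn S (x + 1))
      = coordFn S 0 * coordFn S 1 := by
    funext ζ
    simp only [shiftFn, coordFn, Pi.mul_apply]
    rw [show x + -x = (0 : ZMod N) from by ring, show x + 1 + -x = (1 : ZMod N) from by ring]
  have hx0 : (η x : ℝ) = (ξ 0 : ℝ) := by
    rw [hξ]
    norm_num
  have hx1 : (η (x + 1) : ℝ) = (ξ 1 : ℝ) := by
    show (η (x + 1) : ℝ) = (η (1 + x) : ℝ)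
    rw [add_comm 1 x]
  have hcev : (∑ y : ZMod N, G y * (η y : ℝ))
      = G x * (ξ 0 : ℝ) + G (x + 1) * (ξ 1 : ℝ) + Rx ξ := by
    have h1 := congrFun hshift_f ξ
    have h2 : shiftFn S (-x) f ξ = ∑ y : ZMod N, G y * (η y : ℝ) := by
      simp only [shiftFn, hf, hξ]
      apply Finset.sum_congr rfl
      intro y _
      rw [show y + -x + x = y from by ring]
    rw [← h2, h1]
  rw [hred (f * f), hred f, hred (coordFn S x * coordFn S (x + 1)),
    hshift_ff, hshift_f, hshift_c, hcev, hx0, hx1]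
  exact stmt3_core h01 L01 hA1 hA2 hA3 D hgrad (G x) (G (x + 1)) Rx hRxp hRxb ξ
end

section
/- For all integers κ ≥ 1 and all natural numbers x, y with x ≤ κ and y ≤ κ, writing m = x + y: 2(2κ − 1) · Σ_{β=0}^{m} (β − x)²·C(κ,β)·C(κ, m−β) = C(2κ, m) · [ (κ−1)(x² + y²) − 2κ·xy + κ·(x + y) ], where C(n,k) denotes the binomial coefficient (equal to 0 when k > n). -/
open Finset

private lemma vand (a b m : ℕ) :
    ∑ β ∈ Finset.range (m + 1), a.choose β * b.choose (m - β) = (a + b).choose m := by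
  rw [Nat.add_choose_eq, Finset.Nat.sum_antidiagonal_eq_sum_range_succ_mk]

private lemma mom1 (a b m : ℕ) :
    ∑ β ∈ Finset.range (m + 2), β * (a + 1).choose β * b.choose (m + 1 - β)
      = (a + 1) * (a + b).choose m := by
  rw [Finset.sum_range_succ']
  simp only [Nat.zero_mul, Nat.add_zero, Nat.zero_add, Nat.mul_zero]
  have key : ∀ β, (β + 1) * (a + 1).choose (β + 1) * b.choose (m + 1 - (β + 1))
      = (a + 1) * (a.choose β * b.choose (m - β)) := by
    intro β
    have h2 : m + 1 - (β + 1) = m - β := by omega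
    have p : (β + 1) * (a + 1).choose (β + 1) = (a + 1) * a.choose β := by
      rw [Nat.mul_comm]; exact (Nat.add_one_mul_choose_eq a β).symm
    rw [h2, p, Nat.mul_assoc]
  rw [Finset.sum_congr rfl (fun β _ => key β), ← Finset.mul_sum, vand]

private lemma mom2 (a b m : ℕ) :
    ∑ β ∈ Finset.range (m + 3), β * (β - 1) * (a + 2).choose β * b.choose (m + 2 - β)
      = (a + 2) * (a + 1) * (a + b).choose m := by
  rw [Finset.sum_range_succ', Finset.sum_range_succ']
  simp only [Nat.zero_mul, Nat.mul_zero, Nat.add_zero, Nat.sub_self, Nat.zero_sub,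
    Nat.add_sub_cancel, Nat.zero_add, Nat.mul_one, Nat.one_mul]
  have key : ∀ β, (β + 1 + 1) * (β + 1) * (a + 2).choose (β + 1 + 1) * b.choose (m + 2 - (β + 1 + 1))
      = (a + 2) * (a + 1) * (a.choose β * b.choose (m - β)) := by
    intro β
    have h3 : m + 2 - (β + 1 + 1) = m - β := by omega
    have p1 : (β + 1 + 1) * (a + 2).choose (β + 1 + 1) = (a + 2) * (a + 1).choose (β + 1) := by
      rw [Nat.mul_comm]; exact (Nat.add_one_mul_choose_eq (a + 1) (β + 1)).symm
    have p2 : (β + 1) * (a + 1).choose (β + 1) = (a + 1) * a.choose β := by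
      rw [Nat.mul_comm]; exact (Nat.add_one_mul_choose_eq a β).symm
    rw [h3]
    calc (β + 1 + 1) * (β + 1) * (a + 2).choose (β + 1 + 1) * b.choose (m - β)
        = ((β + 1 + 1) * (a + 2).choose (β + 1 + 1)) * ((β + 1) * b.choose (m - β)) := by ring
      _ = ((a + 2) * (a + 1).choose (β + 1)) * ((β + 1) * b.choose (m - β)) := by rw [p1]
      _ = (a + 2) * (((β + 1) * (a + 1).choose (β + 1)) * b.choose (m - β)) := by ring
      _ = (a + 2) * (((a + 1) * a.choose β) * b.choose (m - β)) := by rw [p2]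
      _ = (a + 2) * (a + 1) * (a.choose β * b.choose (m - β)) := by ring
  rw [Finset.sum_congr rfl (fun β _ => key β), ← Finset.mul_sum, vand]

private lemma mom2' (κ m : ℕ) (hκ : 1 ≤ κ) :
    ∑ β ∈ Finset.range (m + 3), β * (β - 1) * κ.choose β * κ.choose (m + 2 - β)
      = κ * (κ - 1) * (2 * κ - 2).choose m := by
  rcases Nat.lt_or_ge κ 2 with h | h
  · have hκ1 : κ = 1 := by omega
    subst hκ1
    have h0 : ∑ β ∈ Finset.range (m + 3),
        β * (β - 1) * Nat.choose 1 β * Nat.choose 1 (m + 2 - β) = 0 := by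
      apply Finset.sum_eq_zero
      intro β hβ
      rcases β with _ | _ | b
      · simp
      · simp
      · simp [Nat.choose_eq_zero_of_lt (show 1 < b + 2 by omega)]
    rw [h0]
    simp
  · obtain ⟨a, rfl⟩ : ∃ a, κ = a + 2 := ⟨κ - 2, by omega⟩
    have hc : 2 * (a + 2) - 2 = a + (a + 2) := by omega
    have hb : a + 2 - 1 = a + 1 := by omega
    rw [hc, hb]
    exact mom2 a (a + 2) m

/-- **Second moment of the hypergeometric redistribution rate of the binomial
redistribution model (thermalized partial exclusion).** For `κ ≥ 1` and naturals
`x, y ≤ κ`, with `m = x + y`: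
`2(2κ−1)·Σ_{β=0}^{m} (β−x)²·C(κ,β)·C(κ,m−β) = C(2κ,m)·[(κ−1)(x²+y²) − 2κxy + κ(x+y)]`. -/
theorem stmt13 (κ : ℕ) (hκ : 1 ≤ κ) (x y : ℕ) (hx : x ≤ κ) (hy : y ≤ κ) :
    2 * (2 * (κ : ℤ) - 1) *
        ∑ β ∈ Finset.range (x + y + 1),
          ((β : ℤ) - x) ^ 2 * (κ.choose β) * (κ.choose (x + y - β))
      = ((2 * κ).choose (x + y)) *
          (((κ : ℤ) - 1) * ((x : ℤ) ^ 2 + (y : ℤ) ^ 2)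
            - 2 * κ * x * y + κ * ((x : ℤ) + y)) := by
  rcases Nat.lt_or_ge (x + y) 2 with hlt | hge
  · have hcase : (x = 0 ∧ y = 0) ∨ (x = 0 ∧ y = 1) ∨ (x = 1 ∧ y = 0) := by omega
    rcases hcase with ⟨rfl, rfl⟩ | ⟨rfl, rfl⟩ | ⟨rfl, rfl⟩
    · simp
    · simp [Finset.sum_range_succ, Nat.choose_one_right]
      ring
    · simp [Finset.sum_range_succ, Nat.choose_one_right]
      ring
  · obtain ⟨n, hxy⟩ : ∃ n, x + y = n + 2 := ⟨x + y - 2, by omega⟩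
    rw [hxy]
    have hterm : ∀ β ∈ Finset.range (n + 2 + 1),
        ((β : ℤ) - x) ^ 2 * (κ.choose β) * (κ.choose (n + 2 - β))
          = ((β * (β - 1) * κ.choose β * κ.choose (n + 2 - β) : ℕ) : ℤ)
            + (1 - 2 * x) * ((β * κ.choose β * κ.choose (n + 2 - β) : ℕ) : ℤ)
            + (x : ℤ) ^ 2 * ((κ.choose β * κ.choose (n + 2 - β) : ℕ) : ℤ) := by
      intro β _
      rcases β with _ | b
      · push_cast; ring
      · have hb : (b + 1 : ℕ) - 1 = b := rfl
        rw [hb]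
        push_cast
        ring
    rw [Finset.sum_congr rfl hterm]
    rw [Finset.sum_add_distrib, Finset.sum_add_distrib, ← Finset.mul_sum, ← Finset.mul_sum,
      ← Nat.cast_sum, ← Nat.cast_sum, ← Nat.cast_sum]
    have e2 : ∑ β ∈ Finset.range (n + 2 + 1),
        β * (β - 1) * κ.choose β * κ.choose (n + 2 - β)
        = κ * (κ - 1) * (2 * κ - 2).choose n := mom2' κ n hκ
    obtain ⟨a, rfl⟩ : ∃ a, κ = a + 1 := ⟨κ - 1, by omega⟩
    have e1 : ∑ β ∈ Finset.range (n + 2 + 1),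
        β * (a + 1).choose β * (a + 1).choose (n + 2 - β)
        = (a + 1) * (2 * a + 1).choose (n + 1) := by
      have h := mom1 a (a + 1) (n + 1)
      have hr : a + (a + 1) = 2 * a + 1 := by omega
      rw [hr] at h
      exact h
    have e0 : ∑ β ∈ Finset.range (n + 2 + 1),
        (a + 1).choose β * (a + 1).choose (n + 2 - β)
        = (2 * a + 2).choose (n + 2) := by
      have h := vand (a + 1) (a + 1) (n + 2)
      have hr : (a + 1) + (a + 1) = 2 * a + 2 := by omega
      rw [hr] at h
      exact h
    have e2' : ∑ β ∈ Finset.range (n + 2 + 1),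
        β * (β - 1) * (a + 1).choose β * (a + 1).choose (n + 2 - β)
        = (a + 1) * a * (2 * a).choose n := by
      rw [e2, show a + 1 - 1 = a from rfl, show 2 * (a + 1) - 2 = 2 * a from by omega]
    rw [e2', e1, e0]
    have h24 : 2 * (a + 1) = 2 * a + 2 := by omega
    rw [h24]
    have hD : (((2 * a + 2).choose (n + 2) : ℤ)) * ((n : ℤ) + 2)
        = (2 * (a : ℤ) + 2) * ((2 * a + 1).choose (n + 1)) := by
      have h' : (2 * a + 2).choose (n + 2) * (n + 2) = (2 * a + 2) * (2 * a + 1).choose (n + 1) :=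
        (Nat.add_one_mul_choose_eq (2 * a + 1) (n + 1)).symm
      exact_mod_cast h'
    have hB : (((2 * a + 1).choose (n + 1) : ℤ)) * ((n : ℤ) + 1)
        = (2 * (a : ℤ) + 1) * ((2 * a).choose n) := by
      have h' : (2 * a + 1).choose (n + 1) * (n + 1) = (2 * a + 1) * (2 * a).choose n :=
        (Nat.add_one_mul_choose_eq (2 * a) n).symm
      exact_mod_cast h'
    have hyv : (y : ℤ) = (n : ℤ) + 2 - x := by
      have : (x : ℤ) + y = (n : ℤ) + 2 := by exact_mod_cast hxy
      linarith
    rw [hyv]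
    push_cast
    linear_combination (-(((a : ℤ) + 1) - 1) * ((n : ℤ) + 1)
        - (2 * ((a : ℤ) + 1) - 1) * (1 - 2 * (x : ℤ))) * hD
      + (-(((a : ℤ) + 1) - 1) * 2 * ((a : ℤ) + 1)) * hB
end

section
/- For every real s > 0 and all natural numbers x, y, writing n = x + y: Σ_{β=0}^{n} (x − β)² · C(n,β) · B(2s+β, 2s+n−β)/B(2s, 2s) = ((2s+1)/(2(4s+1)))·(x² + y²) − (2s/(4s+1))·xy + (s/(4s+1))·(x + y), where C(n,β) is the binomial coefficient and B(a,b) = Γ(a)Γ(b)/Γ(a+b) is the Euler Beta function. -/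
open Finset Real

lemma gkey : ∀ (n : ℕ) (a b : ℝ), 0 < a → 0 < b →
    ∑ β ∈ Finset.range (n+1), (n.choose β : ℝ) *
        (Real.Gamma (a + β) * Real.Gamma (b + ((n - β : ℕ) : ℝ)))
      = Real.Gamma a * Real.Gamma b / Real.Gamma (a + b) * Real.Gamma (a + b + n) := by
  intro n
  induction n with
  | zero =>
    intro a b ha hb
    have h : Real.Gamma (a+b) ≠ 0 := (Real.Gamma_pos_of_pos (by linarith)).ne'
    simp [div_mul_cancel₀]
    field_simp
  | succ m ih =>
    intro a b ha hb
    have key := Finset.sum_choose_succ_mul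
      (fun i j => Real.Gamma (a + i) * Real.Gamma (b + j)) m
    rw [show m+1+1 = m+2 from rfl, key]
    have eA : ∀ i ∈ Finset.range (m+1), (m.choose i : ℝ) *
        (Real.Gamma (a + i) * Real.Gamma (b + ((m + 1 - i : ℕ) : ℝ)))
        = (m.choose i : ℝ) * (Real.Gamma (a + i) * Real.Gamma ((b+1) + ((m - i : ℕ) : ℝ))) := by
      intro i hi
      have hi' : i ≤ m := Nat.lt_succ_iff.mp (Finset.mem_range.mp hi)
      have h2 : b + ((m + 1 - i : ℕ) : ℝ) = (b+1) + ((m - i : ℕ) : ℝ) := by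
        have : m + 1 - i = (m - i) + 1 := by omega
        rw [this]; push_cast; ring
      rw [h2]
    have eB : ∀ i ∈ Finset.range (m+1), (m.choose i : ℝ) *
        (Real.Gamma (a + ((i + 1 : ℕ) : ℝ)) * Real.Gamma (b + ((m - i : ℕ) : ℝ)))
        = (m.choose i : ℝ) * (Real.Gamma ((a+1) + i) * Real.Gamma (b + ((m - i : ℕ) : ℝ))) := by
      intro i hi
      have h2 : a + ((i + 1 : ℕ) : ℝ) = (a+1) + i := by push_cast; ring
      rw [h2]
    rw [Finset.sum_congr rfl eA, Finset.sum_congr rfl eB,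
      ih a (b+1) ha (by linarith), ih (a+1) b (by linarith) hb]
    have hab : Real.Gamma (a+b) ≠ 0 := (Real.Gamma_pos_of_pos (by linarith)).ne'
    have hab1 : Real.Gamma (a+b+1) ≠ 0 := (Real.Gamma_pos_of_pos (by linarith)).ne'
    have g1 : Real.Gamma (b+1) = b * Real.Gamma b := Real.Gamma_add_one hb.ne'
    have g2 : Real.Gamma (a+1) = a * Real.Gamma a := Real.Gamma_add_one ha.ne'
    have g3 : Real.Gamma (a+b+1) = (a+b) * Real.Gamma (a+b) := Real.Gamma_add_one (by positivity)
    have e4 : a + (b+1) = a + b + 1 := by ring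
    have e5 : a + 1 + b = a + b + 1 := by ring
    have e6 : a + (b+1) + m = a + b + 1 + m := by ring
    have e7 : a + 1 + b + m = a + b + 1 + m := by ring
    have e8 : a + b + ((m:ℝ)+1) = a + b + 1 + m := by ring
    rw [e4, e5]
    push_cast
    rw [e8, g1, g2, g3]
    field_simp
    ring

lemma S1 : ∀ (n : ℕ) (a b : ℝ), 0 < a → 0 < b →
    ∑ β ∈ Finset.range (n+1), (β : ℝ) * (n.choose β : ℝ) *
        (Real.Gamma (a + β) * Real.Gamma (b + ((n - β : ℕ) : ℝ)))
      = n * (Real.Gamma (a+1) * Real.Gamma b / Real.Gamma (a + b + 1)) * Real.Gamma (a + b + n) := by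
  intro n a b ha hb
  cases n with
  | zero => simp
  | succ m =>
    rw [Finset.sum_range_succ']
    have e : ∀ i ∈ Finset.range (m+1), ((i+1 : ℕ) : ℝ) * ((m+1).choose (i+1) : ℝ) *
        (Real.Gamma (a + ((i+1:ℕ):ℝ)) * Real.Gamma (b + ((m+1 - (i+1) : ℕ):ℝ)))
        = ((m:ℝ)+1) * ((m.choose i : ℝ) *
            (Real.Gamma ((a+1) + i) * Real.Gamma (b + ((m - i : ℕ):ℝ)))) := by
      intro i hi
      have hn : (i+1) * ((m+1).choose (i+1)) = (m+1) * m.choose i := by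
        rw [mul_comm]; exact (Nat.add_one_mul_choose_eq m i).symm
      have hc : ((i+1 : ℕ) : ℝ) * ((m+1).choose (i+1) : ℝ) = ((m:ℝ)+1) * (m.choose i : ℝ) := by
        exact_mod_cast hn
      have h1 : m + 1 - (i+1) = m - i := by omega
      have h2 : a + ((i+1:ℕ):ℝ) = (a+1) + i := by push_cast; ring
      rw [h1, h2, hc]; ring
    rw [Finset.sum_congr rfl e, ← Finset.mul_sum,
      gkey m (a+1) b (by linarith) hb]
    have h3 : a + 1 + b = a + b + 1 := by ring
    have h4 : a + b + ((m+1:ℕ):ℝ) = a + b + 1 + m := by push_cast; ring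
    rw [h3, h4]
    push_cast
    ring

lemma S2 : ∀ (n : ℕ) (a b : ℝ), 0 < a → 0 < b →
    ∑ β ∈ Finset.range (n+1), (β : ℝ) * ((β:ℝ) - 1) * (n.choose β : ℝ) *
        (Real.Gamma (a + β) * Real.Gamma (b + ((n - β : ℕ) : ℝ)))
      = n * ((n:ℝ) - 1) * (Real.Gamma (a+2) * Real.Gamma b / Real.Gamma (a + b + 2)) *
          Real.Gamma (a + b + n) := by
  intro n a b ha hb
  cases n with
  | zero => simp
  | succ m =>
    rw [Finset.sum_range_succ']
    have e : ∀ i ∈ Finset.range (m+1), ((i+1 : ℕ) : ℝ) * (((i+1:ℕ):ℝ) - 1) * ((m+1).choose (i+1) : ℝ) *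
        (Real.Gamma (a + ((i+1:ℕ):ℝ)) * Real.Gamma (b + ((m+1 - (i+1) : ℕ):ℝ)))
        = ((m:ℝ)+1) * ((i:ℝ) * (m.choose i : ℝ) *
            (Real.Gamma ((a+1) + i) * Real.Gamma (b + ((m - i : ℕ):ℝ)))) := by
      intro i hi
      have hn : (i+1) * ((m+1).choose (i+1)) = (m+1) * m.choose i := by
        rw [mul_comm]; exact (Nat.add_one_mul_choose_eq m i).symm
      have hc : ((i+1 : ℕ) : ℝ) * ((m+1).choose (i+1) : ℝ) = ((m:ℝ)+1) * (m.choose i : ℝ) := by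
        exact_mod_cast hn
      have h1 : m + 1 - (i+1) = m - i := by omega
      have h2 : a + ((i+1:ℕ):ℝ) = (a+1) + i := by push_cast; ring
      rw [h1, h2]
      have : ((i+1 : ℕ) : ℝ) * (((i+1:ℕ):ℝ) - 1) * ((m+1).choose (i+1) : ℝ)
          = (((i+1:ℕ):ℝ) - 1) * (((i+1 : ℕ) : ℝ) * ((m+1).choose (i+1) : ℝ)) := by ring
      rw [this, hc]
      push_cast; ring
    rw [Finset.sum_congr rfl e, ← Finset.mul_sum, S1 m (a+1) b (by linarith) hb]
    have h3 : a + 1 + b + 1 = a + b + 2 := by ring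
    have h4 : a + b + ((m+1:ℕ):ℝ) = a + 1 + b + m := by push_cast; ring
    have h5 : a + 1 + 1 = a + 2 := by ring
    rw [h3, h4, h5]
    push_cast
    ring


/-- **Second moment of the Beta-Binomial redistribution rate of the discrete KMP model.**
For `s > 0` and naturals `x, y` with `n = x + y`, writing `B(a,b) = Γ(a)Γ(b)/Γ(a+b)`:
`Σ_{β=0}^{n} (x−β)²·C(n,β)·B(2s+β, 2s+n−β)/B(2s,2s)
  = ((2s+1)/(2(4s+1)))(x²+y²) − (2s/(4s+1))xy + (s/(4s+1))(x+y)`. -/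
theorem stmt15 (s : ℝ) (hs : 0 < s) (x y : ℕ) :
    let B : ℝ → ℝ → ℝ := fun a b => Real.Gamma a * Real.Gamma b / Real.Gamma (a + b)
    ∑ β ∈ Finset.range (x + y + 1),
        ((x : ℝ) - β) ^ 2 * ((x + y).choose β) *
          (B (2 * s + β) (2 * s + ((x + y - β : ℕ) : ℝ)) / B (2 * s) (2 * s))
      = ((2 * s + 1) / (2 * (4 * s + 1))) * ((x : ℝ) ^ 2 + (y : ℝ) ^ 2)
        - (2 * s / (4 * s + 1)) * ((x : ℝ) * y)
        + (s / (4 * s + 1)) * ((x : ℝ) + y) := by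
  intro B
  have hB : ∀ a b : ℝ, B a b = Real.Gamma a * Real.Gamma b / Real.Gamma (a + b) := fun _ _ => rfl
  set n := x + y with hn
  have hΓ2s : Real.Gamma (2*s) ≠ 0 := (Real.Gamma_pos_of_pos (by linarith)).ne'
  have hΓ4s : Real.Gamma (4*s) ≠ 0 := (Real.Gamma_pos_of_pos (by linarith)).ne'
  have hΓN : Real.Gamma (4*s + n) ≠ 0 := (Real.Gamma_pos_of_pos (by positivity)).ne'
  set G : ℕ → ℝ := fun β => Real.Gamma (2*s + β) * Real.Gamma (2*s + ((n - β : ℕ) : ℝ)) with hG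
  set K : ℝ := Real.Gamma (4*s) / (Real.Gamma (4*s + n) * Real.Gamma (2*s) ^ 2) with hK
  have step : ∀ β ∈ Finset.range (n+1),
      ((x : ℝ) - β) ^ 2 * (n.choose β : ℝ) *
          (B (2 * s + β) (2 * s + ((n - β : ℕ) : ℝ)) / B (2 * s) (2 * s))
        = ((β:ℝ) * ((β:ℝ) - 1) * (n.choose β : ℝ) * G β
            + (1 - 2*(x:ℝ)) * ((β:ℝ) * (n.choose β : ℝ) * G β)
            + (x:ℝ)^2 * ((n.choose β : ℝ) * G β)) * K := by
    intro β hβ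
    have hβn : β ≤ n := Nat.lt_succ_iff.mp (Finset.mem_range.mp hβ)
    have hc : ((n - β : ℕ) : ℝ) = (n:ℝ) - β := by
      exact Nat.cast_sub hβn
    have hsum : 2 * s + (β:ℝ) + (2 * s + ((n - β : ℕ) : ℝ)) = 4*s + n := by
      rw [hc]; ring
    have hsum2 : 2 * s + 2 * s = 4 * s := by ring
    rw [hB, hB, hsum, hsum2, hG, hK]
    simp only
    field_simp
    ring
  rw [Finset.sum_congr rfl step, ← Finset.sum_mul, Finset.sum_add_distrib,
    Finset.sum_add_distrib, ← Finset.mul_sum, ← Finset.mul_sum]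
  have h2 := S2 n (2*s) (2*s) (by linarith) (by linarith)
  have h1 := S1 n (2*s) (2*s) (by linarith) (by linarith)
  have h0 := gkey n (2*s) (2*s) (by linarith) (by linarith)
  have e1 : 2*s + 2*s = 4*s := by ring
  rw [e1] at h2 h1 h0
  rw [h2, h1, h0]
  have g1 : Real.Gamma (2*s+1) = 2*s * Real.Gamma (2*s) := Real.Gamma_add_one (by positivity)
  have g2 : Real.Gamma (2*s+2) = (2*s+1) * (2*s) * Real.Gamma (2*s) := by
    have : (2:ℝ)*s+2 = (2*s+1) + 1 := by ring
    rw [this, Real.Gamma_add_one (by positivity), g1]; ring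
  have g3 : Real.Gamma (4*s+1) = 4*s * Real.Gamma (4*s) := Real.Gamma_add_one (by positivity)
  have g4 : Real.Gamma (4*s+2) = (4*s+1) * (4*s) * Real.Gamma (4*s) := by
    have : (4:ℝ)*s+2 = (4*s+1) + 1 := by ring
    rw [this, Real.Gamma_add_one (by positivity), g3]; ring
  rw [g1, g2, g3, g4, hK]
  have hnc : (n:ℝ) = (x:ℝ) + y := by rw [hn]; push_cast; ring
  rw [hnc]
  have h4s1 : (4:ℝ)*s + 1 ≠ 0 := by positivity
  field_simp
  ring
end

section
/- For every r > 0, θ ∈ (−π/2, π/2) and s ∈ ℝ: ∫_ℝ p_{r,θ}(β)·p_{r,θ}(s − β) dβ = p_{2r,θ}(s); that is, the generalized hyperbolic secant densities form a convolution semigroup in the parameter r. -/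
open Real MeasureTheory

/-- The generalized hyperbolic secant (GHS) density with parameters `r > 0` and
`θ ∈ (−π/2, π/2)`:
`p_{r,θ}(s) = e^{θs}·(cos θ)^r·(2^{r−2}/(π·Γ(r)))·|Γ(r/2 + i·s/2)|²`. -/
noncomputable def ghsDensity (r θ s : ℝ) : ℝ :=
  Real.exp (θ * s) * Real.cos θ ^ r * ((2 : ℝ) ^ (r - 2) / (π * Real.Gamma r)) *
    ‖Complex.Gamma ((r : ℂ) / 2 + Complex.I * (s : ℂ) / 2)‖ ^ 2

namespace GHS19

open FourierTransform Set

noncomputable def hw (c u : ℝ) : ℝ := Real.exp (-c * Real.log (2 * Real.cosh (u / 2)))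

lemma two_cosh_pos (u : ℝ) : 0 < 2 * Real.cosh (u / 2) := by positivity

lemma hw_pos (c u : ℝ) : 0 < hw c u := Real.exp_pos _

lemma abs_le_log_two_cosh (u : ℝ) : |u| / 2 ≤ Real.log (2 * Real.cosh (u / 2)) := by
  rw [Real.le_log_iff_exp_le (two_cosh_pos u)]
  rw [Real.cosh_eq]
  rw [show |u| / 2 = |u / 2| by rw [abs_div]; simp [abs_of_nonneg]]
  rcases abs_cases (u / 2) with ⟨h, _⟩ | ⟨h, _⟩ <;> rw [h] <;>
    nlinarith [Real.exp_pos (u/2), Real.exp_pos (-(u/2))]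

lemma hw_le (c : ℝ) (hc : 0 ≤ c) (u : ℝ) : hw c u ≤ Real.exp (-(c / 2) * |u|) := by
  rw [hw, Real.exp_le_exp]
  have := abs_le_log_two_cosh u
  nlinarith

lemma integrable_exp_neg_abs {b : ℝ} (hb : 0 < b) :
    Integrable (fun u : ℝ => Real.exp (-b * |u|)) := by
  have h1 : IntegrableOn (fun u : ℝ => Real.exp (-b * |u|)) (Set.Ioi 0) := by
    apply (exp_neg_integrableOn_Ioi 0 hb).congr_fun _ measurableSet_Ioi
    intro x hx
    simp [abs_of_pos (mem_Ioi.mp hx)]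
  rw [← integrableOn_univ, ← @Iio_union_Ici _ _ (0 : ℝ), integrableOn_union,
    integrableOn_Ici_iff_integrableOn_Ioi]
  refine ⟨?_, h1⟩
  rw [← (Measure.measurePreserving_neg (volume : Measure ℝ)).integrableOn_comp_preimage
      (Homeomorph.neg ℝ).measurableEmbedding]
  simpa only [Function.comp_def, abs_neg, neg_preimage, neg_Iio, neg_zero] using h1

lemma continuous_hw (c : ℝ) : Continuous (hw c) := by
  apply Real.continuous_exp.comp
  apply Continuous.mul continuous_const
  apply Continuous.log (by fun_prop)
  exact fun x => (two_cosh_pos x).ne'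

lemma integrable_hw {c : ℝ} (hc : 0 < c) : Integrable (hw c) := by
  refine (integrable_exp_neg_abs (by linarith : 0 < c / 2)).mono'
    ((continuous_hw c).aestronglyMeasurable) ?_
  filter_upwards with u
  rw [Real.norm_eq_abs, abs_of_pos (hw_pos c u)]
  exact hw_le c hc.le u

lemma hw_mul_self (c u : ℝ) : hw c u * hw c u = hw (2 * c) u := by
  simp only [hw, ← Real.exp_add]; ring_nf

noncomputable def hw1 (c u : ℝ) : ℝ := -(c / 2) * Real.tanh (u / 2) * hw c u
noncomputable def hw2 (c u : ℝ) : ℝ :=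
  -(c / 2) * ((1 / Real.cosh (u / 2) ^ 2) * (1 / 2) * hw c u + Real.tanh (u / 2) * hw1 c u)

lemma hasDerivAt_log2cosh (u : ℝ) :
    HasDerivAt (fun u : ℝ => Real.log (2 * Real.cosh (u / 2))) (Real.tanh (u / 2) / 2) u := by
  have h1 : HasDerivAt (fun u : ℝ => u / 2) (1 / 2) u := (hasDerivAt_id u).div_const 2
  have h2 := (Real.hasDerivAt_cosh (u / 2)).comp u h1
  have h3 := h2.const_mul (2 : ℝ)
  have h4 := h3.log (two_cosh_pos u).ne'
  simp only [Function.comp_def] at h4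
  convert h4 using 1
  rw [Real.tanh_eq_sinh_div_cosh]
  ring

lemma hasDerivAt_hw (c u : ℝ) : HasDerivAt (hw c) (hw1 c u) u := by
  have h := ((hasDerivAt_log2cosh u).const_mul (-c)).exp
  exact h.congr_deriv (by rw [hw1, hw]; ring)

lemma hasDerivAt_tanh_half (u : ℝ) :
    HasDerivAt (fun u : ℝ => Real.tanh (u / 2)) ((1 / Real.cosh (u / 2) ^ 2) * (1 / 2)) u := by
  have h1 : HasDerivAt (fun u : ℝ => u / 2) (1 / 2) u := (hasDerivAt_id u).div_const 2
  have hs := (Real.hasDerivAt_sinh (u / 2)).comp u h1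
  have hc := (Real.hasDerivAt_cosh (u / 2)).comp u h1
  have h := hs.div hc (Real.cosh_pos (u / 2)).ne'
  simp only [Function.comp_def] at h
  have heq : (fun u : ℝ => Real.sinh (u / 2)) / (fun u : ℝ => Real.cosh (u / 2)) =
      fun u : ℝ => Real.tanh (u / 2) := by
    funext v; rw [Pi.div_apply, Real.tanh_eq_sinh_div_cosh]
  rw [heq] at h
  refine h.congr_deriv ?_
  have hpos := Real.cosh_pos (u / 2)
  have hid := Real.cosh_sq_sub_sinh_sq (u / 2)
  field_simp
  nlinarith

lemma hasDerivAt_hw1 (c u : ℝ) : HasDerivAt (hw1 c) (hw2 c u) u := by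
  have h := ((hasDerivAt_tanh_half u).const_mul (-(c / 2))).mul (hasDerivAt_hw c u)
  exact h.congr_deriv (by rw [hw2, hw1]; ring)

lemma abs_tanh_le_one (x : ℝ) : |Real.tanh x| ≤ 1 := by
  rw [Real.tanh_eq_sinh_div_cosh, abs_div, abs_of_pos (Real.cosh_pos x),
    div_le_one (Real.cosh_pos x)]
  rw [Real.sinh_eq, Real.cosh_eq]
  rcases abs_cases ((Real.exp x - Real.exp (-x)) / 2) with ⟨h, _⟩ | ⟨h, _⟩ <;> rw [h] <;>
    nlinarith [Real.exp_pos x, Real.exp_pos (-x)]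

lemma continuous_tanh_half : Continuous (fun u : ℝ => Real.tanh (u / 2)) := by
  have : (fun u : ℝ => Real.tanh (u / 2)) = fun u : ℝ => Real.sinh (u / 2) / Real.cosh (u / 2) := by
    funext v; rw [Real.tanh_eq_sinh_div_cosh]
  rw [this]
  exact (Real.continuous_sinh.comp (by fun_prop)).div (Real.continuous_cosh.comp (by fun_prop))
    fun x => (Real.cosh_pos _).ne'

lemma continuous_hw1 (c : ℝ) : Continuous (hw1 c) := by
  exact (continuous_const.mul continuous_tanh_half).mul (continuous_hw c)

lemma abs_hw1_le (c u : ℝ) : |hw1 c u| ≤ |c| / 2 * hw c u := by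
  rw [hw1, abs_mul, abs_mul, abs_of_pos (hw_pos c u)]
  have h1 := abs_tanh_le_one (u / 2)
  have h2 := (hw_pos c u).le
  have : |(-(c / 2))| = |c| / 2 := by rw [abs_neg, abs_div]; norm_num
  rw [this]
  nlinarith [mul_le_mul_of_nonneg_left h1 (by nlinarith [hw_pos c u, abs_nonneg c] : (0:ℝ) ≤ |c| / 2 * hw c u)]

lemma abs_hw2_le (c u : ℝ) : |hw2 c u| ≤ (|c| / 2 * (1 / 2 + |c| / 2)) * hw c u := by
  have hc2 : (0:ℝ) < Real.cosh (u / 2) ^ 2 := by positivity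
  have h1 : |1 / Real.cosh (u / 2) ^ 2 * (1 / 2) * hw c u| ≤ 1 / 2 * hw c u := by
    rw [abs_mul, abs_mul, abs_of_pos (hw_pos c u),
      abs_of_pos (one_div_pos.mpr hc2),
      abs_of_pos (by norm_num : (0:ℝ) < 1 / 2)]
    have hle : 1 / Real.cosh (u / 2) ^ 2 ≤ 1 := by
      rw [div_le_one hc2]
      nlinarith [Real.one_le_cosh (u / 2)]
    nlinarith [mul_le_mul_of_nonneg_right hle (by nlinarith [hw_pos c u] : (0:ℝ) ≤ 1 / 2 * hw c u)]
  have h2 : |Real.tanh (u / 2) * hw1 c u| ≤ |c| / 2 * hw c u := by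
    rw [abs_mul]
    calc |Real.tanh (u / 2)| * |hw1 c u| ≤ 1 * |hw1 c u| := by
          apply mul_le_mul_of_nonneg_right (abs_tanh_le_one _) (abs_nonneg _)
      _ = |hw1 c u| := one_mul _
      _ ≤ |c| / 2 * hw c u := abs_hw1_le c u
  rw [hw2, abs_mul]
  have h3 : |(-(c / 2))| = |c| / 2 := by rw [abs_neg, abs_div]; norm_num
  rw [h3]
  calc |c| / 2 * |1 / Real.cosh (u / 2) ^ 2 * (1 / 2) * hw c u + Real.tanh (u / 2) * hw1 c u|
      ≤ |c| / 2 * (|1 / Real.cosh (u / 2) ^ 2 * (1 / 2) * hw c u| + |Real.tanh (u / 2) * hw1 c u|) := by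
        apply mul_le_mul_of_nonneg_left (abs_add_le _ _) (by positivity)
    _ ≤ |c| / 2 * (1 / 2 * hw c u + |c| / 2 * hw c u) := by
        apply mul_le_mul_of_nonneg_left (add_le_add h1 h2) (by positivity)
    _ = (|c| / 2 * (1 / 2 + |c| / 2)) * hw c u := by ring

lemma integrable_hw1 {c : ℝ} (hc : 0 < c) : Integrable (hw1 c) := by
  refine ((integrable_hw hc).const_mul (|c| / 2)).mono'
    ((continuous_hw1 c).aestronglyMeasurable) ?_
  filter_upwards with u
  rw [Real.norm_eq_abs]
  exact abs_hw1_le c u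

lemma continuous_hw2 (c : ℝ) : Continuous (hw2 c) := by
  apply Continuous.mul continuous_const
  apply Continuous.add
  · exact (Continuous.mul (Continuous.div continuous_const (by fun_prop)
      (fun x => by positivity)) continuous_const).mul (continuous_hw c)
  · exact continuous_tanh_half.mul (continuous_hw1 c)

lemma integrable_hw2 {c : ℝ} (hc : 0 < c) : Integrable (hw2 c) := by
  refine ((integrable_hw hc).const_mul (|c| / 2 * (1 / 2 + |c| / 2))).mono'
    ((continuous_hw2 c).aestronglyMeasurable) ?_
  filter_upwards with u
  rw [Real.norm_eq_abs]
  exact abs_hw2_le c u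

/-! complex-valued weight -/

noncomputable def wC (c : ℝ) : ℝ → ℂ := fun u => ((hw c u : ℝ) : ℂ)

lemma integrable_wC {c : ℝ} (hc : 0 < c) : Integrable (wC c) := (integrable_hw hc).ofReal
lemma continuous_wC (c : ℝ) : Continuous (wC c) := Complex.continuous_ofReal.comp (continuous_hw c)

lemma hasDerivAt_wC (c u : ℝ) : HasDerivAt (wC c) ((hw1 c u : ℝ) : ℂ) u :=
  (hasDerivAt_hw c u).ofReal_comp

lemma deriv_wC (c : ℝ) : deriv (wC c) = fun u => ((hw1 c u : ℝ) : ℂ) := by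
  funext u; exact (hasDerivAt_wC c u).deriv

noncomputable def wC1 (c : ℝ) : ℝ → ℂ := fun u => ((hw1 c u : ℝ) : ℂ)

lemma hasDerivAt_wC1 (c u : ℝ) : HasDerivAt (wC1 c) ((hw2 c u : ℝ) : ℂ) u :=
  (hasDerivAt_hw1 c u).ofReal_comp

lemma deriv_wC1 (c : ℝ) : deriv (wC1 c) = fun u => ((hw2 c u : ℝ) : ℂ) := by
  funext u; exact (hasDerivAt_wC1 c u).deriv

lemma continuous_fourier_wC {c : ℝ} (hc : 0 < c) : Continuous (𝓕 (wC c)) :=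
  VectorFourier.fourierIntegral_continuous Real.continuous_fourierChar
    (by exact continuous_inner) (integrable_wC hc)

lemma fourier_wC1_eq {c : ℝ} (hc : 0 < c) :
    𝓕 (wC1 c) = fun x : ℝ => (2 * ↑π * Complex.I * ↑x) • 𝓕 (wC c) x := by
  have h := Real.fourier_deriv (integrable_wC hc)
    (fun u => (hasDerivAt_wC c u).differentiableAt) ?_
  · rw [deriv_wC] at h; exact h
  · rw [deriv_wC]; exact (integrable_hw1 hc).ofReal

lemma fourier_wC2_eq {c : ℝ} (hc : 0 < c) :
    𝓕 (fun u => ((hw2 c u : ℝ) : ℂ)) =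
      fun x : ℝ => (2 * ↑π * Complex.I * ↑x) • (2 * ↑π * Complex.I * ↑x) • 𝓕 (wC c) x := by
  have hint : Integrable (wC1 c) := by unfold wC1; exact (integrable_hw1 hc).ofReal
  have h := Real.fourier_deriv hint
    (fun u => (hasDerivAt_wC1 c u).differentiableAt) ?_
  · rw [deriv_wC1] at h
    rw [h, fourier_wC1_eq hc]
  · rw [deriv_wC1]; exact (integrable_hw2 hc).ofReal

lemma integrable_fourier_wC {c : ℝ} (hc : 0 < c) : Integrable (𝓕 (wC c)) := by
  set A := ∫ u, ‖wC c u‖ with hA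
  set B := ∫ u, ‖((hw2 c u : ℝ) : ℂ)‖ with hB
  have hbound : ∀ x : ℝ, ‖𝓕 (wC c) x‖ ≤ (A + B / (4 * π ^ 2)) * (1 + x ^ 2)⁻¹ := by
    intro x
    have h1 : ‖𝓕 (wC c) x‖ ≤ A :=
      VectorFourier.norm_fourierIntegral_le_integral_norm _ _ _ _ _
    have h2 : ‖𝓕 (fun u => ((hw2 c u : ℝ) : ℂ)) x‖ ≤ B :=
      VectorFourier.norm_fourierIntegral_le_integral_norm _ _ _ _ _
    rw [fourier_wC2_eq hc] at h2
    have h3 : ‖(2 * ↑π * Complex.I * ↑x) • (2 * ↑π * Complex.I * ↑x) • 𝓕 (wC c) x‖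
        = (2 * π * |x|) ^ 2 * ‖𝓕 (wC c) x‖ := by
      rw [norm_smul, norm_smul]
      simp only [norm_mul, Complex.norm_real, Complex.norm_I, Real.norm_eq_abs,
        Complex.norm_ofNat]
      rw [abs_of_pos pi_pos]
      ring
    rw [h3] at h2
    have hπ : (0:ℝ) < 4 * π ^ 2 := by positivity
    have h4 : x ^ 2 * ‖𝓕 (wC c) x‖ ≤ B / (4 * π ^ 2) := by
      have hexp : (2 * π * |x|) ^ 2 = 4 * π ^ 2 * x ^ 2 := by
        rw [mul_pow, mul_pow, sq_abs]; ring
      rw [hexp] at h2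
      rw [le_div_iff₀ hπ]
      nlinarith [h2]
    have hx2 : (0:ℝ) < 1 + x ^ 2 := by positivity
    calc ‖𝓕 (wC c) x‖ = ((1 + x ^ 2) * ‖𝓕 (wC c) x‖) * (1 + x ^ 2)⁻¹ := by
          field_simp
      _ ≤ (A + B / (4 * π ^ 2)) * (1 + x ^ 2)⁻¹ := by
          apply mul_le_mul_of_nonneg_right _ (by positivity)
          nlinarith
  refine ((integrable_inv_one_add_sq).const_mul (A + B / (4 * π ^ 2))).mono'
    (continuous_fourier_wC hc).aestronglyMeasurable ?_
  filter_upwards with x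
  exact hbound x

/-- `K c x = ∫ e^{iux} (2 cosh(u/2))^{-c} du`. -/
noncomputable def K (c x : ℝ) : ℂ := ∫ u : ℝ, Complex.exp (↑(u * x) * Complex.I) * wC c u

lemma K_eq_fourier (c x : ℝ) : K c x = 𝓕 (wC c) (-x / (2 * π)) := by
  rw [K, Real.fourier_real_eq_integral_exp_smul]
  apply integral_congr_ae
  filter_upwards with v
  rw [smul_eq_mul,
    show -2 * π * v * (-x / (2 * π)) = v * x from by field_simp]

lemma K_eq_fourier' (c : ℝ) : K c = fun x => 𝓕 (wC c) ((-(2 * π))⁻¹ * x) := by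
  funext x
  rw [K_eq_fourier]
  congr 1
  field_simp

lemma integrable_K {c : ℝ} (hc : 0 < c) : Integrable (K c) := by
  rw [K_eq_fourier']
  exact (integrable_fourier_wC hc).comp_mul_left'
    (inv_ne_zero (neg_ne_zero.mpr (by positivity)))

lemma continuous_K {c : ℝ} (hc : 0 < c) : Continuous (K c) := by
  rw [K_eq_fourier']
  exact (continuous_fourier_wC hc).comp (by fun_prop)

lemma J_eq {c : ℝ} (hc : 0 < c) (v : ℝ) :
    ∫ x : ℝ, Complex.exp (↑(-(v * x)) * Complex.I) * K c x = (2 * π) * wC c v := by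
  have hπ : (0:ℝ) < 2 * π := by positivity
  set G : ℝ → ℂ := fun ξ => Complex.exp (↑(2 * π * (ξ * v)) * Complex.I) * 𝓕 (wC c) ξ with hG
  have h1 : ∀ x : ℝ, Complex.exp (↑(-(v * x)) * Complex.I) * K c x = G ((-(2 * π))⁻¹ * x) := by
    intro x
    rw [K_eq_fourier, hG]
    have : (-(2 * π))⁻¹ * x = -x / (2 * π) := by field_simp
    rw [this]
    show _ = Complex.exp (↑(2 * π * (-x / (2 * π) * v)) * Complex.I) * _
    rw [show 2 * π * (-x / (2 * π) * v) = -(v * x) from by field_simp]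
  simp_rw [h1]
  rw [Measure.integral_comp_mul_left G ((-(2 * π))⁻¹)]
  have h2 : |((-(2 * π))⁻¹)⁻¹| = 2 * π := by
    rw [inv_inv, abs_neg, abs_of_pos hπ]
  rw [h2]
  have h3 : ∫ ξ, G ξ = 𝓕⁻ (𝓕 (wC c)) v := by
    rw [Real.fourierInv_eq']
    apply integral_congr_ae
    filter_upwards with ξ
    rw [smul_eq_mul, hG,
      show (inner ℝ ξ v : ℝ) = ξ * v from by rw [RCLike.inner_apply', conj_trivial]]
  rw [h3, (continuous_wC c).fourierInv_fourier_eq (integrable_wC hc) (integrable_fourier_wC hc)]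
  rw [Complex.real_smul]
  push_cast
  ring

lemma K_mul_K (c u : ℝ) : wC c u * wC c u = wC (2 * c) u := by
  simp only [wC]
  rw [← Complex.ofReal_mul, hw_mul_self]

lemma K_conv {c : ℝ} (hc : 0 < c) (t : ℝ) :
    ∫ x : ℝ, K c x * K c (t - x) = (2 * π) * K (2 * c) t := by
  have step1 : ∀ x : ℝ, K c x * K c (t - x)
      = ∫ v : ℝ, K c x * (Complex.exp (↑(v * (t - x)) * Complex.I) * wC c v) := by
    intro x
    rw [integral_const_mul]
    rfl
  simp_rw [step1]
  have hF : Integrable (fun z : ℝ × ℝ =>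
      K c z.1 * (Complex.exp (↑(z.2 * (t - z.1)) * Complex.I) * wC c z.2))
      (volume.prod volume) := by
    have h1 : Integrable (fun z : ℝ × ℝ => ‖K c z.1‖ * hw c z.2) (volume.prod volume) :=
      (integrable_K hc).norm.mul_prod (integrable_hw hc)
    refine h1.mono' ?_ ?_
    · apply Continuous.aestronglyMeasurable
      apply Continuous.mul
      · exact (continuous_K hc).comp continuous_fst
      · apply Continuous.mul
        · exact Complex.continuous_exp.comp
            ((Complex.continuous_ofReal.comp (by fun_prop)).mul continuous_const)
        · exact (continuous_wC c).comp continuous_snd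
    · filter_upwards with z
      rw [norm_mul, norm_mul, Complex.norm_exp_ofReal_mul_I, one_mul]
      apply le_of_eq
      congr 1
      simp only [wC, Complex.norm_real, Real.norm_eq_abs]
      exact abs_of_pos (hw_pos c z.2)
  rw [integral_integral_swap hF]
  have step2 : ∀ v : ℝ, (∫ x : ℝ, K c x * (Complex.exp (↑(v * (t - x)) * Complex.I) * wC c v))
      = Complex.exp (↑(v * t) * Complex.I) * wC c v * ((2 * π) * wC c v) := by
    intro v
    have hsplit : ∀ x : ℝ, K c x * (Complex.exp (↑(v * (t - x)) * Complex.I) * wC c v)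
        = (Complex.exp (↑(v * t) * Complex.I) * wC c v)
            * (Complex.exp (↑(-(v * x)) * Complex.I) * K c x) := by
      intro x
      rw [show (↑(v * (t - x)) * Complex.I : ℂ)
          = ↑(v * t) * Complex.I + ↑(-(v * x)) * Complex.I by push_cast; ring,
        Complex.exp_add]
      ring
    simp_rw [hsplit]
    rw [integral_const_mul, J_eq hc v]
  simp_rw [step2]
  have step3 : ∀ v : ℝ, Complex.exp (↑(v * t) * Complex.I) * wC c v * (2 * ↑π * wC c v)
      = (2 * ↑π : ℂ) * (Complex.exp (↑(v * t) * Complex.I) * wC (2 * c) v) := by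
    intro v
    rw [← K_mul_K c v]
    ring
  simp_rw [step3]
  rw [integral_const_mul, K]
/-- the logistic function -/
noncomputable def lg (u : ℝ) : ℝ := (1 + Real.exp (-u))⁻¹
noncomputable def lg' (u : ℝ) : ℝ := Real.exp (-u) / (1 + Real.exp (-u)) ^ 2

lemma one_add_exp_pos (u : ℝ) : 0 < 1 + Real.exp (-u) := by positivity

lemma lg_pos (u : ℝ) : 0 < lg u := by rw [lg]; positivity
lemma lg_lt_one (u : ℝ) : lg u < 1 := by
  rw [lg]
  rw [inv_lt_one_iff₀]
  right
  nlinarith [Real.exp_pos (-u)]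

lemma lg'_pos (u : ℝ) : 0 < lg' u := by rw [lg']; positivity

lemma one_sub_lg (u : ℝ) : 1 - lg u = Real.exp (-u) * lg u := by
  rw [lg]
  have := one_add_exp_pos u
  field_simp
  ring

lemma lg'_eq (u : ℝ) : lg' u = lg u * (1 - lg u) := by
  rw [one_sub_lg, lg, lg']
  have := one_add_exp_pos u
  field_simp

lemma hasDerivAt_lg (u : ℝ) : HasDerivAt lg (lg' u) u := by
  have h1 : HasDerivAt (fun u : ℝ => -u) (-1) u := (hasDerivAt_id u).neg
  have h2 := (Real.hasDerivAt_exp (-u)).comp u h1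
  have h3 := h2.const_add (1 : ℝ)
  have h4 := h3.inv (one_add_exp_pos u).ne'
  simp only [Function.comp_def] at h4
  exact h4.congr_deriv (by rw [lg']; ring)

lemma lg_image : lg '' univ = Ioo (0:ℝ) 1 := by
  apply Subset.antisymm
  · rintro τ ⟨u, -, rfl⟩
    exact ⟨lg_pos u, lg_lt_one u⟩
  · rintro τ ⟨h0, h1⟩
    refine ⟨Real.log (τ / (1 - τ)), trivial, ?_⟩
    have h1t : 0 < 1 - τ := by linarith
    rw [lg, ← Real.log_inv, Real.exp_log (by positivity)]
    rw [show (τ / (1 - τ))⁻¹ = (1 - τ) / τ by rw [inv_div]]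
    field_simp
    ring

lemma lg_injOn : InjOn lg univ := by
  intro u _ v _ h
  rw [lg, lg] at h
  have := inv_injective h
  have h2 : Real.exp (-u) = Real.exp (-v) := by linarith
  have := Real.exp_injective h2
  linarith

lemma log_lg (u : ℝ) : Real.log (lg u) = u / 2 - Real.log (2 * Real.cosh (u / 2)) := by
  have key : 1 + Real.exp (-u) = Real.exp (-(u / 2)) * (2 * Real.cosh (u / 2)) := by
    rw [Real.cosh_eq]
    rw [show Real.exp (-(u/2)) * (2 * ((Real.exp (u/2) + Real.exp (-(u/2))) / 2))
        = Real.exp (-(u/2)) * Real.exp (u/2) + Real.exp (-(u/2)) * Real.exp (-(u/2)) by ring]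
    rw [← Real.exp_add, ← Real.exp_add]
    norm_num
    ring
  rw [lg, Real.log_inv, key, Real.log_mul (Real.exp_pos _).ne' (two_cosh_pos u).ne',
    Real.log_exp]
  ring

lemma log_one_sub_lg (u : ℝ) :
    Real.log (1 - lg u) = -(u / 2) - Real.log (2 * Real.cosh (u / 2)) := by
  rw [one_sub_lg, Real.log_mul (Real.exp_pos _).ne' (lg_pos u).ne', Real.log_exp, log_lg]
  ring

/-- Claim A pointwise integrand identity. -/
lemma integrand_eq (a x u : ℝ) :
    |lg' u| • ((↑(lg u) : ℂ) ^ ((↑a + ↑x * Complex.I) - 1)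
        * (1 - ↑(lg u) : ℂ) ^ ((↑a - ↑x * Complex.I) - 1))
      = Complex.exp (↑(u * x) * Complex.I) * wC (2 * a) u := by
  have ht0 := lg_pos u
  have ht1 := lg_lt_one u
  have h1t : (0:ℝ) < 1 - lg u := by linarith
  have hne : ((lg u : ℝ) : ℂ) ≠ 0 := by exact_mod_cast ht0.ne'
  have hne1 : ((1 : ℂ) - ↑(lg u)) ≠ 0 := by
    rw [show ((1 : ℂ) - ↑(lg u)) = ((1 - lg u : ℝ) : ℂ) by push_cast; ring]
    exact_mod_cast h1t.ne'
  rw [abs_of_pos (lg'_pos u), lg'_eq]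
  rw [Complex.cpow_def_of_ne_zero hne, Complex.cpow_def_of_ne_zero hne1]
  rw [show ((1 : ℂ) - ↑(lg u)) = ((1 - lg u : ℝ) : ℂ) by push_cast; ring]
  rw [← Complex.ofReal_log ht0.le, ← Complex.ofReal_log h1t.le]
  have hsmul : (lg u * (1 - lg u) : ℝ) • (Complex.exp (↑(Real.log (lg u)) * (↑a + ↑x * Complex.I - 1))
        * Complex.exp (↑(Real.log (1 - lg u)) * (↑a - ↑x * Complex.I - 1)))
      = Complex.exp (↑(Real.log (lg u)) + ↑(Real.log (1 - lg u)))
        * (Complex.exp (↑(Real.log (lg u)) * (↑a + ↑x * Complex.I - 1))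
        * Complex.exp (↑(Real.log (1 - lg u)) * (↑a - ↑x * Complex.I - 1))) := by
    rw [Complex.real_smul, ← Complex.ofReal_add, ← Complex.ofReal_exp]
    congr 2
    rw [Real.exp_add, Real.exp_log ht0, Real.exp_log h1t]
  rw [hsmul, ← Complex.exp_add, ← Complex.exp_add]
  rw [wC, hw, Complex.ofReal_exp, ← Complex.exp_add]
  congr 1
  rw [log_lg, log_one_sub_lg]
  push_cast
  ring


lemma betaIntegral_eq_K (a x : ℝ) :
    Complex.betaIntegral (↑a + ↑x * Complex.I) (↑a - ↑x * Complex.I) = K (2 * a) x := by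
  rw [Complex.betaIntegral]
  rw [intervalIntegral.integral_of_le (by norm_num : (0:ℝ) ≤ 1)]
  rw [integral_Ioc_eq_integral_Ioo]
  rw [← lg_image]
  rw [integral_image_eq_integral_abs_deriv_smul MeasurableSet.univ
      (fun u _ => (hasDerivAt_lg u).hasDerivWithinAt) lg_injOn]
  rw [Measure.restrict_univ]
  trans ∫ u : ℝ, Complex.exp (↑(u * x) * Complex.I) * wC (2 * a) u
  · exact integral_congr_ae (Filter.Eventually.of_forall fun u => integrand_eq a x u)
  · rfl

lemma gammaPair_eq (a x : ℝ) (ha : 0 < a) :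
    Complex.Gamma (↑a + ↑x * Complex.I) * Complex.Gamma (↑a - ↑x * Complex.I)
      = ↑(Real.Gamma (2 * a)) * K (2 * a) x := by
  have hs : 0 < (↑a + ↑x * Complex.I).re := by
    simpa using ha
  have ht : 0 < (↑a - ↑x * Complex.I).re := by
    simpa using ha
  rw [Complex.Gamma_mul_Gamma_eq_betaIntegral hs ht, betaIntegral_eq_K]
  congr 1
  rw [show (↑a + ↑x * Complex.I) + (↑a - ↑x * Complex.I) = ((2 * a : ℝ) : ℂ) by push_cast; ring,
    Complex.Gamma_ofReal]

lemma gammaPair_ofReal (a x : ℝ) :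
    (↑(‖Complex.Gamma (↑a + ↑x * Complex.I)‖ ^ 2) : ℂ)
      = Complex.Gamma (↑a + ↑x * Complex.I) * Complex.Gamma (↑a - ↑x * Complex.I) := by
  have hconj : Complex.Gamma (↑a - ↑x * Complex.I)
      = starRingEnd ℂ (Complex.Gamma (↑a + ↑x * Complex.I)) := by
    rw [← Complex.Gamma_conj]
    congr 1
    rw [map_add, Complex.conj_ofReal, map_mul, Complex.conj_ofReal, Complex.conj_I]
    ring
  rw [hconj, Complex.mul_conj, Complex.sq_norm]

noncomputable def q (a x : ℝ) : ℝ := ‖Complex.Gamma (↑a + ↑x * Complex.I)‖ ^ 2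

lemma q_ofReal (a x : ℝ) : ((q a x : ℝ) : ℂ)
    = Complex.Gamma (↑a + ↑x * Complex.I) * Complex.Gamma (↑a - ↑x * Complex.I) :=
  gammaPair_ofReal a x

lemma q_conv {a : ℝ} (ha : 0 < a) (t : ℝ) :
    ∫ x : ℝ, q a x * q a (t - x)
      = (2 * π * Real.Gamma (2 * a) ^ 2 / Real.Gamma (4 * a)) * q (2 * a) t := by
  have hG4 : Real.Gamma (4 * a) ≠ 0 := (Real.Gamma_pos_of_pos (by linarith)).ne'
  rw [← Complex.ofReal_inj,
    show ((∫ x : ℝ, q a x * q a (t - x) : ℝ) : ℂ)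
      = ∫ x : ℝ, ((q a x * q a (t - x) : ℝ) : ℂ) from integral_ofReal.symm]
  have h1 : ∀ x : ℝ, ((q a x * q a (t - x) : ℝ) : ℂ)
      = (↑(Real.Gamma (2 * a)) * ↑(Real.Gamma (2 * a))) * (K (2 * a) x * K (2 * a) (t - x)) := by
    intro x
    rw [Complex.ofReal_mul, q_ofReal, q_ofReal, gammaPair_eq a x ha, gammaPair_eq a (t - x) ha]
    ring
  simp_rw [h1]
  rw [integral_const_mul, K_conv (by linarith : (0:ℝ) < 2 * a) t]
  have h2 : K (2 * (2 * a)) t = K (2 * (2 * a)) t := rfl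
  have h3 : (↑(Real.Gamma (4 * a)) : ℂ) * K (2 * (2 * a)) t = ↑(q (2 * a) t) := by
    rw [q_ofReal, gammaPair_eq (2 * a) t (by linarith)]
    norm_num [show (2 : ℝ) * (2 * a) = 4 * a from by ring]
  have hne : (↑(Real.Gamma (4 * a)) : ℂ) ≠ 0 := by exact_mod_cast hG4
  have h4 : K (2 * (2 * a)) t = ↑(q (2 * a) t) / ↑(Real.Gamma (4 * a)) := by
    rw [← h3, mul_comm ((Real.Gamma (4 * a) : ℝ) : ℂ) (K (2 * (2 * a)) t), mul_div_assoc,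
      div_self hne, mul_one]
  rw [h4]
  push_cast
  field_simp
end GHS19

/-- **Convolution semigroup property of the GHS densities.** For `r > 0`,
`θ ∈ (−π/2, π/2)` and `s ∈ ℝ`: `∫ p_{r,θ}(β)·p_{r,θ}(s−β) dβ = p_{2r,θ}(s)`. -/
theorem stmt19 (r θ : ℝ) (hr : 0 < r) (hθ : θ ∈ Set.Ioo (-(π / 2)) (π / 2)) (s : ℝ) :
    ∫ β : ℝ, ghsDensity r θ β * ghsDensity r θ (s - β) = ghsDensity (2 * r) θ s := by
  have hcos : 0 < Real.cos θ := Real.cos_pos_of_mem_Ioo hθ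
  set Cst : ℝ := Real.exp (θ * s) * (Real.cos θ ^ r * Real.cos θ ^ r) *
    ((2 : ℝ) ^ (r - 2) / (π * Real.Gamma r)) ^ 2 with hCst
  have hpoint : ∀ β : ℝ, ghsDensity r θ β * ghsDensity r θ (s - β)
      = Cst * (GHS19.q (r / 2) (β / 2) * GHS19.q (r / 2) ((s - β) / 2)) := by
    intro β
    rw [ghsDensity, ghsDensity, GHS19.q, GHS19.q]
    rw [show ((r : ℂ) / 2 + Complex.I * (β : ℂ) / 2) = (↑(r / 2) + ↑(β / 2) * Complex.I) by
      push_cast; ring]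
    rw [show ((r : ℂ) / 2 + Complex.I * ((s - β : ℝ) : ℂ) / 2)
        = (↑(r / 2) + ↑((s - β) / 2) * Complex.I) by push_cast; ring]
    have he : Real.exp (θ * β) * Real.exp (θ * (s - β)) = Real.exp (θ * s) := by
      rw [← Real.exp_add]; congr 1; ring
    rw [hCst, ← he]
    ring
  simp_rw [hpoint]
  rw [integral_const_mul]
  have hsub : ∫ β : ℝ, GHS19.q (r / 2) (β / 2) * GHS19.q (r / 2) ((s - β) / 2)
      = 2 * ∫ x : ℝ, GHS19.q (r / 2) x * GHS19.q (r / 2) (s / 2 - x) := by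
    have h := Measure.integral_comp_mul_left
      (fun β : ℝ => GHS19.q (r / 2) (β / 2) * GHS19.q (r / 2) ((s - β) / 2)) 2
    have hc : ∀ x : ℝ, GHS19.q (r / 2) (2 * x / 2) * GHS19.q (r / 2) ((s - 2 * x) / 2)
        = GHS19.q (r / 2) x * GHS19.q (r / 2) (s / 2 - x) := by
      intro x
      rw [show 2 * x / 2 = x by ring, show (s - 2 * x) / 2 = s / 2 - x by ring]
    simp_rw [hc] at h
    rw [h, smul_eq_mul]
    rw [show |(2:ℝ)⁻¹| = 2⁻¹ by rw [abs_of_pos]; norm_num]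
    ring
  rw [hsub, GHS19.q_conv (by linarith : (0:ℝ) < r / 2) (s / 2)]
  rw [show 2 * (r / 2) = r by ring, show 4 * (r / 2) = 2 * r by ring]
  rw [ghsDensity]
  rw [show ((2 * r : ℝ) : ℂ) / 2 + Complex.I * (s : ℂ) / 2
      = (↑r + ↑(s / 2) * Complex.I) by push_cast; ring]
  have hπ : (π : ℝ) ≠ 0 := Real.pi_ne_zero
  have hΓr : Real.Gamma r ≠ 0 := (Real.Gamma_pos_of_pos hr).ne'
  have hΓ2r : Real.Gamma (2 * r) ≠ 0 := (Real.Gamma_pos_of_pos (by linarith)).ne'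
  have e1 : Real.cos θ ^ (2 * r) = Real.cos θ ^ r * Real.cos θ ^ r := by
    rw [← Real.rpow_add hcos]; ring_nf
  have e4 : (2 : ℝ) ^ (2 * r - 2) = (2 : ℝ) ^ (r - 2) * (2 : ℝ) ^ (r - 2) * 4 := by
    rw [show (4 : ℝ) = (2 : ℝ) ^ (2 : ℝ) by
        rw [show (2:ℝ) = ((2:ℕ):ℝ) by norm_num, Real.rpow_natCast]; norm_num,
      ← Real.rpow_add two_pos, ← Real.rpow_add two_pos]
    ring_nf
  rw [hCst, e1, e4]
  have : GHS19.q r (s / 2) = ‖Complex.Gamma (↑r + ↑(s / 2) * Complex.I)‖ ^ 2 := rfl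
  rw [← this]
  field_simp
  ring
end
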